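/- arXiv:1707.05033 — 12 statements merged into one kernel-verified Lean document; each statement's English description precedes it below -/
import Mathlib

section
/- Let (Ω, P) be a probability space and Y : Ω → ℝ a random variable with P(Y ≥ u) > 0 for every real u. Let ξ ≥ 0, σ > 0, and let ã : (0,∞) → (0,∞) be a function such that sup_{x ≥ 0} | P(Y ≥ u + ã(u)·x) / P(Y ≥ u) − F̄_GPD(x; σ, ξ) | → 0 as u → ∞. Set X = ⌊Y⌋ and a_u = σ·ã(u). Then, as u → ∞ along the positive integers, sup_{k ∈ ℕ} | P(X = u + k) / P(X ≥ u) − p_DGPD(k; a_u, ξ) | → 0. -/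
open MeasureTheory Filter
open scoped ProbabilityTheory

/-- Generalized Pareto survival function `F̄_GPD(x; σ, ξ)` for `ξ ≥ 0`:
`(1 + ξx/σ)^(-1/ξ)` if `ξ > 0`, and `e^(-x/σ)` if `ξ = 0`. -/
noncomputable def gpdSurv (σ ξ x : ℝ) : ℝ :=
  if ξ = 0 then Real.exp (-x / σ) else (1 + ξ * x / σ) ^ (-1 / ξ)

/-- Discrete generalized Pareto probability mass function
`p_DGPD(k; σ, ξ) = F̄_GPD(k; σ, ξ) - F̄_GPD(k+1; σ, ξ)`. -/
noncomputable def pDGPD (σ ξ : ℝ) (k : ℕ) : ℝ :=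
  gpdSurv σ ξ k - gpdSurv σ ξ (k + 1)

lemma gpdSurv_scale (σ ξ a x : ℝ) (ha : a ≠ 0) :
    gpdSurv (σ * a) ξ x = gpdSurv σ ξ (x / a) := by
  unfold gpdSurv
  split_ifs with h
  · congr 1
    field_simp
  · congr 2
    field_simp

/-- If `Y ∈ MDA_ξ` with normalization `aa(u)`, i.e.
`sup_{x ≥ 0} |P(Y ≥ u + aa(u)x)/P(Y ≥ u) - F̄_GPD(x;σ,ξ)| → 0` as `u → ∞`, then with
`X = ⌊Y⌋` and `a_u = σ·aa(u)`, as `u → ∞` along the positive integers,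
`sup_{k ∈ ℕ} |P(X = u+k | X ≥ u) - p_DGPD(k; a_u, ξ)| → 0`. -/
theorem floor_exceedances_tendsto_DGPD
    {Ω : Type*} [MeasureSpace Ω] [IsProbabilityMeasure (ℙ : Measure Ω)]
    (Y : Ω → ℝ) (hY : Measurable Y)
    (hpos : ∀ u : ℝ, 0 < (ℙ {ω | u ≤ Y ω}).toReal)
    (ξ σ : ℝ) (hξ : 0 ≤ ξ) (hσ : 0 < σ)
    (aa : ℝ → ℝ) (haa : ∀ u : ℝ, 0 < u → 0 < aa u)
    (hconv : ∀ ε > (0:ℝ), ∃ U : ℝ, ∀ u ≥ U, ∀ x ≥ (0:ℝ),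
      |(ℙ {ω | u + aa u * x ≤ Y ω}).toReal / (ℙ {ω | u ≤ Y ω}).toReal
        - gpdSurv σ ξ x| ≤ ε) :
    ∀ ε > (0:ℝ), ∃ N : ℕ, ∀ u : ℕ, N ≤ u → ∀ k : ℕ,
      |(ℙ {ω | ⌊Y ω⌋ = (u : ℤ) + (k : ℤ)}).toReal
          / (ℙ {ω | (u : ℤ) ≤ ⌊Y ω⌋}).toReal
        - pDGPD (σ * aa u) ξ k| ≤ ε := by
  intro ε hε
  obtain ⟨U, hU⟩ := hconv (ε / 2) (by linarith)
  refine ⟨max 1 ⌈U⌉₊, fun u hu k => ?_⟩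
  have hu1 : (1 : ℕ) ≤ u := le_trans (le_max_left _ _) hu
  have hupos : (0 : ℝ) < u := by exact_mod_cast hu1
  have huU : (U : ℝ) ≤ u := by
    have : ⌈U⌉₊ ≤ u := le_trans (le_max_right _ _) hu
    exact le_trans (Nat.le_ceil U) (by exact_mod_cast this)
  have ha : 0 < aa u := haa u hupos
  have ha' : aa u ≠ 0 := ne_of_gt ha
  -- the survival function of Y
  set S : ℝ → ℝ := fun t => (ℙ {ω | t ≤ Y ω}).toReal with hS
  -- rewrite the floor sets
  have hset1 : {ω | (u : ℤ) ≤ ⌊Y ω⌋} = {ω | (u : ℝ) ≤ Y ω} := by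
    ext ω; simp [Int.le_floor]
  have hset2 : {ω | ⌊Y ω⌋ = (u : ℤ) + (k : ℤ)} =
      {ω | ((u : ℝ) + k) ≤ Y ω} \ {ω | ((u : ℝ) + k + 1) ≤ Y ω} := by
    ext ω
    simp only [Set.mem_setOf_eq, Set.mem_diff, Int.floor_eq_iff, not_le]
    constructor
    · rintro ⟨h1, h2⟩
      push_cast at h1 h2 ⊢
      constructor <;> linarith
    · rintro ⟨h1, h2⟩
      push_cast
      constructor <;> linarith
  have hmeas : ∀ t : ℝ, MeasurableSet {ω | t ≤ Y ω} := fun t =>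
    hY measurableSet_Ici
  have hsub : {ω | ((u : ℝ) + k + 1) ≤ Y ω} ⊆ {ω | ((u : ℝ) + k) ≤ Y ω} := by
    intro ω h
    simp only [Set.mem_setOf_eq] at h ⊢
    linarith
  have hdiff : (ℙ ({ω | ((u : ℝ) + k) ≤ Y ω} \ {ω | ((u : ℝ) + k + 1) ≤ Y ω})).toReal
      = S ((u : ℝ) + k) - S ((u : ℝ) + k + 1) := by
    rw [measure_diff hsub ((hmeas _).nullMeasurableSet) (measure_ne_top _ _),
      ENNReal.toReal_sub_of_le (measure_mono hsub) (measure_ne_top _ _)]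
  -- apply the hypothesis at x = k / aa u and x = (k+1) / aa u
  have hx1 : (0:ℝ) ≤ (k : ℝ) / aa u := div_nonneg (Nat.cast_nonneg k) ha.le
  have hx2 : (0:ℝ) ≤ ((k : ℝ) + 1) / aa u :=
    div_nonneg (by positivity) ha.le
  have h1 := hU u huU ((k : ℝ) / aa u) hx1
  have h2 := hU u huU (((k : ℝ) + 1) / aa u) hx2
  have hm1 : (u : ℝ) + aa u * ((k : ℝ) / aa u) = (u : ℝ) + k := by
    field_simp
  have hm2 : (u : ℝ) + aa u * (((k : ℝ) + 1) / aa u) = (u : ℝ) + k + 1 := by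
    field_simp
    ring
  rw [hm1] at h1
  rw [hm2] at h2
  have hp : pDGPD (σ * aa u) ξ k =
      gpdSurv σ ξ ((k : ℝ) / aa u) - gpdSurv σ ξ (((k : ℝ) + 1) / aa u) := by
    rw [pDGPD, gpdSurv_scale σ ξ (aa u) _ ha', gpdSurv_scale σ ξ (aa u) _ ha']
  rw [hset1, hset2, hdiff, hp, sub_div]
  have : S ((u:ℝ) + k) / S u - S ((u:ℝ) + ↑k + 1) / S u
      - (gpdSurv σ ξ ((k : ℝ) / aa u) - gpdSurv σ ξ (((k : ℝ) + 1) / aa u))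
      = (S ((u:ℝ) + k) / S u - gpdSurv σ ξ ((k : ℝ) / aa u))
        - (S ((u:ℝ) + ↑k + 1) / S u - gpdSurv σ ξ (((k : ℝ) + 1) / aa u)) := by
    ring
  rw [this]
  calc _ ≤ |S ((u:ℝ) + k) / S u - gpdSurv σ ξ ((k : ℝ) / aa u)|
        + |S ((u:ℝ) + ↑k + 1) / S u - gpdSurv σ ξ (((k : ℝ) + 1) / aa u)| :=
          abs_sub _ _
    _ ≤ ε / 2 + ε / 2 := add_le_add h1 h2
    _ = ε := by ring
end

section
/- Let ξ > 0 and let F̄ : [0,∞) → (0,∞) be a nonincreasing function satisfying F̄(ux)/F̄(u) → x^{−1/ξ−1} as u → ∞, for every real x ≥ 1 (i.e., F̄ is regularly varying with index −1/ξ−1). Let p : ℕ → (0,∞) be a probability mass function (∑_{k=0}^{∞} p(k) = 1) for which there exist c > 0 and d ∈ ℕ with p(k) = c·F̄(k) for all integers k ≥ d. Then for every real x ≥ 1, (∑_{i=⌈ux⌉}^{∞} p(i)) / (∑_{i=u}^{∞} p(i)) → x^{−1/ξ} as u → ∞ along the positive integers; that is, the tail u ↦ ∑_{i≥u} p(i)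 is regularly varying with index −1/ξ. -/
/-!
Karamata's theorem: if `F` is regularly varying with index `ρ < -1`, then
`∑_{k ≥ m} F k ~ m F(m) / (-1 - ρ)`. Doubling steps give Potter bounds `F (u s) ≤ C s^σ F u`
with `ρ < σ < -1`, so dominated convergence turns `∫_u^∞ F = u ∫_1^∞ F (u s) ds` into
`u F(u) ∫_1^∞ s^ρ ds`, and the integral test compares the tail sum with this integral up to one
term `F m`. Hence the tail at `⌈u x⌉` over the tail at `u` behaves like `x · x^ρ`.
-/

open Filter Topology MeasureTheory Set

def RegularlyVarying (F : ℝ → ℝ) (ρ : ℝ) : Prop :=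
  ∀ x ≥ (1 : ℝ), Tendsto (fun u => F (u * x) / F u) atTop (𝓝 (x ^ ρ))

section

variable {F : ℝ → ℝ} {ρ : ℝ}

theorem RegularlyVarying.exists_potter_bound (hFpos : ∀ x ≥ (0 : ℝ), 0 < F x)
    (hFanti : AntitoneOn F (Ici 0)) (hRV : RegularlyVarying F ρ) {σ : ℝ} (hρσ : ρ < σ)
    (hσ : σ ≤ 0) :
    ∃ U > 0, ∀ u ≥ U, ∀ t ≥ (1 : ℝ), F (u * t) ≤ 2 ^ (-σ) * t ^ σ * F u := by
  have hlt : (2 : ℝ) ^ ρ < 2 ^ σ := Real.rpow_lt_rpow_of_exponent_lt one_lt_two hρσ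
  obtain ⟨U, hU⟩ := eventually_atTop.mp
    (((hRV 2 one_le_two).eventually_lt_const hlt).and (eventually_gt_atTop 0))
  have hdouble : ∀ u ≥ U, F (u * 2) ≤ 2 ^ σ * F u := fun u hu => by
    have ⟨h, hu0⟩ := hU u hu
    exact ((div_lt_iff₀ (hFpos u hu0.le)).mp h).le
  have hiterate : ∀ u ≥ U, ∀ n : ℕ, F (u * 2 ^ n) ≤ ((2 : ℝ) ^ n) ^ σ * F u := by
    intro u hu n
    induction n with
    | zero => simp
    | succ n ih =>
      have hun : U ≤ u * 2 ^ n :=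
        hu.trans (le_mul_of_one_le_right (hU u hu).2.le (one_le_pow₀ one_le_two))
      calc F (u * 2 ^ (n + 1)) = F (u * 2 ^ n * 2) := by rw [pow_succ, mul_assoc]
        _ ≤ 2 ^ σ * F (u * 2 ^ n) := hdouble _ hun
        _ ≤ 2 ^ σ * (((2 : ℝ) ^ n) ^ σ * F u) := by gcongr
        _ = ((2 : ℝ) ^ (n + 1)) ^ σ * F u := by
          rw [pow_succ, Real.mul_rpow (by positivity) zero_le_two]; ring
  refine ⟨U, (hU U le_rfl).2, fun u hu t ht => ?_⟩
  have hu0 : 0 < u := (hU u hu).2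
  obtain ⟨n, htn, htn'⟩ := exists_nat_pow_near ht one_lt_two
  calc F (u * t) ≤ F (u * 2 ^ n) :=
        hFanti (by simp only [mem_Ici]; positivity) (by simp only [mem_Ici]; positivity) (by gcongr)
    _ ≤ ((2 : ℝ) ^ n) ^ σ * F u := hiterate u hu n
    _ = 2 ^ (-σ) * ((2 : ℝ) ^ (n + 1)) ^ σ * F u := by
        rw [pow_succ, Real.mul_rpow (by positivity) zero_le_two, Real.rpow_neg zero_le_two]
        field_simp
    _ ≤ 2 ^ (-σ) * t ^ σ * F u := by
        have := Real.rpow_le_rpow_of_nonpos (by linarith) htn'.le hσ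
        have := hFpos u hu0.le
        gcongr

theorem AntitoneOn.comp_const_mul (hFanti : AntitoneOn F (Ici 0)) {u : ℝ} (hu : 0 ≤ u) :
    AntitoneOn (fun s => F (u * s)) (Ici 0) := fun _ hs _ ht hst =>
  hFanti (mul_nonneg hu hs) (mul_nonneg hu ht) (mul_le_mul_of_nonneg_left hst hu)

theorem RegularlyVarying.exists_integrableOn_Ioi (hFpos : ∀ x ≥ (0 : ℝ), 0 < F x)
    (hFanti : AntitoneOn F (Ici 0)) (hRV : RegularlyVarying F ρ) (hρ : ρ < -1) :
    ∃ U > 0, IntegrableOn F (Ioi U) := by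
  obtain ⟨U, hU, hpotter⟩ := hRV.exists_potter_bound hFpos hFanti (σ := (ρ - 1) / 2)
    (by linarith) (by linarith)
  refine ⟨U, hU, ?_⟩
  rw [← mul_one U, ← integrableOn_Ioi_comp_mul_left_iff F 1 hU]
  refine (((integrableOn_Ioi_rpow_of_lt (a := (ρ - 1) / 2) (by linarith) zero_lt_one).const_mul
    (2 ^ (-((ρ - 1) / 2)))).mul_const (F U)).mono' ?_ ?_
  · exact (aemeasurable_restrict_of_antitoneOn measurableSet_Ioi
      ((hFanti.comp_const_mul hU.le).mono (Ioi_subset_Ici zero_le_one))).aestronglyMeasurable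
  · filter_upwards [ae_restrict_mem measurableSet_Ioi] with s hs
    rw [Real.norm_of_nonneg (hFpos _ (mul_pos hU (zero_lt_one.trans hs)).le).le]
    exact hpotter U le_rfl s (le_of_lt hs)

theorem RegularlyVarying.tendsto_setIntegral_Ioi_div (hFpos : ∀ x ≥ (0 : ℝ), 0 < F x)
    (hFanti : AntitoneOn F (Ici 0)) (hRV : RegularlyVarying F ρ) (hρ : ρ < -1) :
    Tendsto (fun u => (∫ t in Ioi u, F t) / (u * F u)) atTop (𝓝 (-1 - ρ)⁻¹) := by
  obtain ⟨U, hU, hpotter⟩ := hRV.exists_potter_bound hFpos hFanti (σ := (ρ - 1) / 2)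
    (by linarith) (by linarith)
  have hdct : Tendsto (fun u => ∫ s in Ioi 1, F (u * s) / F u) atTop
      (𝓝 (∫ s in Ioi (1 : ℝ), s ^ ρ)) := by
    refine tendsto_integral_filter_of_dominated_convergence
      (fun s => 2 ^ (-((ρ - 1) / 2)) * s ^ ((ρ - 1) / 2)) ?_ ?_ ?_ ?_
    · filter_upwards [eventually_ge_atTop 0] with u hu
      exact ((aemeasurable_restrict_of_antitoneOn measurableSet_Ioi
        ((hFanti.comp_const_mul hu).mono (Ioi_subset_Ici zero_le_one))).div_const
          _).aestronglyMeasurable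
    · filter_upwards [eventually_ge_atTop U] with u hu
      filter_upwards [ae_restrict_mem measurableSet_Ioi] with s hs
      have hu0 : 0 < u := hU.trans_le hu
      have hs0 : 0 < s := zero_lt_one.trans hs
      rw [Real.norm_of_nonneg (div_nonneg (hFpos _ (by positivity)).le (hFpos u hu0.le).le),
        div_le_iff₀ (hFpos u hu0.le)]
      exact hpotter u hu s (le_of_lt hs)
    · exact (integrableOn_Ioi_rpow_of_lt (by linarith) zero_lt_one).const_mul _
    · filter_upwards [ae_restrict_mem measurableSet_Ioi] with s hs using hRV s (le_of_lt hs)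
  have hval : ∫ s in Ioi (1 : ℝ), s ^ ρ = (-1 - ρ)⁻¹ := by
    rw [integral_Ioi_rpow_of_lt hρ zero_lt_one, Real.one_rpow, neg_div, ← div_neg, neg_add',
      one_div]
    ring
  rw [hval] at hdct
  refine hdct.congr' ?_
  filter_upwards [eventually_gt_atTop 0] with u hu
  rw [integral_div, ← mul_one u, ← integral_comp_mul_left_Ioi' F 1 hu, mul_one, smul_eq_mul,
    mul_div_mul_left _ _ hu.ne']

theorem RegularlyVarying.tendsto_tsum_nat_add_div (hFpos : ∀ x ≥ (0 : ℝ), 0 < F x)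
    (hFanti : AntitoneOn F (Ici 0)) (hRV : RegularlyVarying F ρ) (hρ : ρ < -1) :
    Tendsto (fun m : ℕ => (∑' n : ℕ, F (n + m : ℕ)) / (m * F m)) atTop (𝓝 (-1 - ρ)⁻¹) := by
  obtain ⟨U, -, hint⟩ := hRV.exists_integrableOn_Ioi hFpos hFanti hρ
  have hnonneg (N : ℕ) : ∀ t ∈ Ioi (N : ℝ), 0 ≤ F t := fun t ht =>
    (hFpos t (N.cast_nonneg.trans (le_of_lt ht))).le
  have hsum : Summable fun n : ℕ => F n :=
    (hFanti.mono (Ici_subset_Ici.2 (Nat.cast_nonneg _))).summable_of_integrableOn_Ioi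
      (N := ⌈U⌉₊) (hint.mono_set (Ioi_subset_Ioi (Nat.le_ceil U))) (hnonneg _)
  have hI := (hRV.tendsto_setIntegral_Ioi_div hFpos hFanti hρ).comp tendsto_natCast_atTop_atTop
  have hI' : Tendsto (fun m : ℕ => (∫ t in Ioi (m : ℝ), F t) / (m * F m) + (m : ℝ)⁻¹) atTop
      (𝓝 (-1 - ρ)⁻¹) := by
    simpa using hI.add tendsto_inv_atTop_nhds_zero_nat
  refine tendsto_of_tendsto_of_tendsto_of_le_of_le' hI hI' ?_ ?_
  · filter_upwards with m
    have := (hFanti.mono (Ici_subset_Ici.2 m.cast_nonneg)).integral_le_tsum_comp_add m hsum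
      (hnonneg _)
    have := hFpos m m.cast_nonneg
    dsimp only [Function.comp_apply]
    gcongr
  · filter_upwards [eventually_ge_atTop ⌈U⌉₊] with m hmU
    have hFm := hFpos m m.cast_nonneg
    have htail := (hFanti.mono (Ici_subset_Ici.2 m.cast_nonneg)).tsum_comp_add_le_integral m
      (hint.mono_set (Ioi_subset_Ioi ((Nat.le_ceil U).trans (Nat.cast_le.2 hmU))))
      (hnonneg _)
    rw [((summable_nat_add_iff m).2 hsum).tsum_eq_zero_add]
    simp only [zero_add, add_right_comm _ 1 m]
    rw [add_div, add_comm, div_mul_cancel_right₀ hFm.ne']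
    gcongr

theorem RegularlyVarying.tendsto_natCeil_mul_div (hFpos : ∀ x ≥ (0 : ℝ), 0 < F x)
    (hFanti : AntitoneOn F (Ici 0)) (hRV : RegularlyVarying F ρ) {x : ℝ} (hx : 1 ≤ x) :
    Tendsto (fun u : ℕ => F ⌈u * x⌉₊ / F u) atTop (𝓝 (x ^ ρ)) := by
  have hx0 : 0 < x := by linarith
  have hseq (y : ℝ) (hy : 1 ≤ y) : Tendsto (fun u : ℕ => F (u * y) / F u) atTop (𝓝 (y ^ ρ)) :=
    (hRV y hy).comp tendsto_natCast_atTop_atTop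
  rw [tendsto_order]
  refine ⟨fun a ha => ?_, fun b hb => ?_⟩
  · have hcont : Tendsto (fun t : ℝ => t ^ ρ) (𝓝[>] x) (𝓝 (x ^ ρ)) :=
      (Real.continuousAt_rpow_const x ρ (Or.inl hx0.ne')).tendsto.mono_left nhdsWithin_le_nhds
    obtain ⟨x', hax', hxx'⟩ := ((hcont.eventually_const_lt ha).and self_mem_nhdsWithin).exists
    have hxx' : 0 < x' - x := sub_pos.2 hxx'
    filter_upwards [(hseq x' (hx.trans (by linarith))).eventually_const_lt hax',
      tendsto_natCast_atTop_atTop.eventually_ge_atTop (x' - x)⁻¹] with u hu hux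
    have hceil : (⌈u * x⌉₊ : ℝ) ≤ u * x' := by
      have := Nat.ceil_lt_add_one (mul_nonneg u.cast_nonneg hx0.le)
      have := (inv_le_iff_one_le_mul₀ hxx').mp hux
      nlinarith
    have := hFpos u u.cast_nonneg
    refine hu.trans_le ?_
    gcongr
    exact hFanti (mem_Ici.2 (Nat.cast_nonneg _)) (mem_Ici.2 ((Nat.cast_nonneg _).trans hceil))
      hceil
  · filter_upwards [(hseq x hx).eventually_lt_const hb] with u hu
    have := hFpos u u.cast_nonneg
    refine lt_of_le_of_lt ?_ hu
    gcongr
    exact hFanti (mem_Ici.2 (by positivity)) (mem_Ici.2 (Nat.cast_nonneg _)) (Nat.le_ceil _)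

theorem Nat.le_ceil_mul_of_one_le {x : ℝ} (hx : 1 ≤ x) (u : ℕ) : u ≤ ⌈u * x⌉₊ :=
  Nat.cast_le.1 ((le_mul_of_one_le_right u.cast_nonneg hx).trans (Nat.le_ceil _))

theorem RegularlyVarying.tendsto_tsum_nat_add_natCeil_mul_div (hFpos : ∀ x ≥ (0 : ℝ), 0 < F x)
    (hFanti : AntitoneOn F (Ici 0)) (hRV : RegularlyVarying F ρ) (hρ : ρ < -1) {x : ℝ}
    (hx : 1 ≤ x) :
    Tendsto (fun u : ℕ => (∑' n : ℕ, F (n + ⌈u * x⌉₊ : ℕ)) / ∑' n : ℕ, F (n + u : ℕ)) atTop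
      (𝓝 (x ^ (ρ + 1))) := by
  have hT := hRV.tendsto_tsum_nat_add_div hFpos hFanti hρ
  have hceil_div : Tendsto (fun u : ℕ => (⌈u * x⌉₊ : ℝ) / u) atTop (𝓝 x) := by
    simpa only [Function.comp_def, mul_comm x] using
      (tendsto_nat_ceil_mul_div_atTop (zero_le_one.trans hx)).comp tendsto_natCast_atTop_atTop
  have hceil := tendsto_atTop_mono (Nat.le_ceil_mul_of_one_le hx) tendsto_id
  have hprod := (((hT.comp hceil).mul hceil_div).mul
    (hRV.tendsto_natCeil_mul_div hFpos hFanti hx)).mul (hT.inv₀ (inv_ne_zero (by linarith)))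
  have hlim : (-1 - ρ)⁻¹ * x * x ^ ρ * (-1 - ρ)⁻¹⁻¹ = x ^ (ρ + 1) := by
    have : -1 - ρ ≠ 0 := by linarith
    rw [Real.rpow_add_one (by linarith)]
    field_simp
  rw [hlim] at hprod
  refine hprod.congr' ?_
  filter_upwards [eventually_gt_atTop 0] with u hu
  have hu' : (0 : ℝ) < u := Nat.cast_pos.2 hu
  have hceil_pos : (0 : ℝ) < ⌈u * x⌉₊ :=
    Nat.cast_pos.2 (hu.trans_le (Nat.le_ceil_mul_of_one_le hx u))
  have := hFpos u hu'.le
  have := hFpos _ hceil_pos.le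
  rcases eq_or_ne (∑' n : ℕ, F (n + u : ℕ)) 0 with h | h
  · simp only [Function.comp_apply, h, zero_div, inv_zero, mul_zero, div_zero]
  · simp only [Function.comp_apply]
    field_simp

end

theorem pmf_tail_regularly_varying_general (ξ : ℝ) (hξ : 0 < ξ) (F : ℝ → ℝ)
    (hFpos : ∀ x ≥ (0:ℝ), 0 < F x)
    (hFanti : AntitoneOn F (Set.Ici 0))
    (hRV : ∀ x ≥ (1:ℝ), Filter.Tendsto (fun u : ℝ => F (u * x) / F u)
      Filter.atTop (nhds (x ^ (-1/ξ - 1))))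
    (p : ℕ → ℝ)
    (c : ℝ) (hc : 0 < c) (d : ℕ) (hpF : ∀ k ≥ d, p k = c * F k) :
    ∀ x ≥ (1:ℝ), Filter.Tendsto
      (fun u : ℕ => (∑' i : ℕ, p (⌈(u : ℝ) * x⌉₊ + i)) / (∑' i : ℕ, p (u + i)))
      Filter.atTop (nhds (x ^ (-1/ξ))) := by
  intro x hx
  have hρ : -1 / ξ - 1 < -1 := by
    have := div_neg_of_neg_of_pos neg_one_lt_zero hξ
    linarith
  have hlim := RegularlyVarying.tendsto_tsum_nat_add_natCeil_mul_div hFpos hFanti hRV hρ hx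
  rw [sub_add_cancel] at hlim
  have htail (m : ℕ) (hm : d ≤ m) : ∑' i : ℕ, p (m + i) = c * ∑' n : ℕ, F (n + m : ℕ) := by
    rw [← tsum_mul_left]
    exact tsum_congr fun i => by rw [add_comm, hpF _ (by omega)]
  refine hlim.congr' ?_
  filter_upwards [eventually_ge_atTop d] with u hu
  rw [htail u hu, htail _ (hu.trans (Nat.le_ceil_mul_of_one_le hx u)), mul_div_mul_left _ _ hc.ne']

/-- If `F̄` is positive, nonincreasing on `[0,∞)` and regularly varying
with index `-1/ξ - 1` (`ξ > 0`), and `p` is a probability mass function on `ℕ` with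
`p(k) = c·F̄(k)` for all `k ≥ d`, then the tail `u ↦ ∑_{i ≥ u} p(i)` is regularly
varying with index `-1/ξ`: for every `x ≥ 1`,
`(∑_{i = ⌈ux⌉}^∞ p(i)) / (∑_{i = u}^∞ p(i)) → x^(-1/ξ)` as `u → ∞` over the integers. -/
theorem pmf_tail_regularly_varying (ξ : ℝ) (hξ : 0 < ξ) (F : ℝ → ℝ)
    (hFpos : ∀ x ≥ (0:ℝ), 0 < F x)
    (hFanti : AntitoneOn F (Set.Ici 0))
    (hRV : ∀ x ≥ (1:ℝ), Filter.Tendsto (fun u : ℝ => F (u * x) / F u)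
      Filter.atTop (nhds (x ^ (-1/ξ - 1))))
    (p : ℕ → ℝ) (hppos : ∀ k, 0 < p k) (hpsum : ∑' k : ℕ, p k = 1)
    (c : ℝ) (hc : 0 < c) (d : ℕ) (hpF : ∀ k ≥ d, p k = c * F k) :
    ∀ x ≥ (1:ℝ), Filter.Tendsto
      (fun u : ℕ => (∑' i : ℕ, p (⌈(u : ℝ) * x⌉₊ + i)) / (∑' i : ℕ, p (u + i)))
      Filter.atTop (nhds (x ^ (-1/ξ))) :=
  pmf_tail_regularly_varying_general ξ hξ F hFpos hFanti hRV p c hc d hpF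
end

section
/- Let ξ > 0 and let F̄ : [0,∞) → (0,∞) be a nonincreasing function satisfying F̄(ux)/F̄(u) → x^{−1/ξ−1} as u → ∞, for every real x ≥ 1. Let p : ℕ → (0,∞) be a probability mass function for which there exist c > 0 and d ∈ ℕ with p(k) = c·F̄(k) for all integers k ≥ d. Then for any sequence of nonnegative integers (k_u)_{u≥1} with sup_u k_u/u < ∞, one has [ p(u + k_u) / ∑_{i=u}^{∞} p(i) ] / p_GZD(k_u; ξu, ξ) → 1 as u → ∞ along the positive integers. -/
/-- Generalized Zipf distribution probability mass function
`p_GZD(k; σ, ξ) = (1 + ξk/σ)^(-1/ξ-1) / ∑_{i=0}^∞ (1 + ξi/σ)^(-1/ξ-1)` (case `ξ > 0`). -/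
noncomputable def pGZD (σ ξ : ℝ) (k : ℕ) : ℝ :=
  (1 + ξ * k / σ) ^ (-1/ξ - 1) / ∑' i : ℕ, (1 + ξ * i / σ) ^ (-1/ξ - 1)

open Filter


/-- summability of `(1+j)^(-η)` for `η > 1`. -/
lemma aux_summable_one_add_rpow {η : ℝ} (hη : 1 < η) :
    Summable (fun j : ℕ => (1 + (j : ℝ)) ^ (-η)) := by
  have h := (Real.summable_nat_rpow (p := -η)).2 (by linarith)
  have h2 := (summable_nat_add_iff (f := fun n : ℕ => (n : ℝ) ^ (-η)) 1).2 h
  refine h2.congr fun j => ?_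
  push_cast
  ring_nf

/-- Blocking bound: if `h i ≤ G (i / u)` then `∑ h ≤ u * ∑ G`. -/
lemma aux_block (u : ℕ) (hu : 0 < u) (G : ℕ → ℝ) (hG0 : ∀ j, 0 ≤ G j) (hGs : Summable G)
    (h : ℕ → ℝ) (hh0 : ∀ i, 0 ≤ h i) (hhle : ∀ i, h i ≤ G (i / u)) :
    Summable h ∧ ∑' i, h i ≤ u * ∑' j, G j := by
  haveI : NeZero u := ⟨hu.ne'⟩
  set e := Nat.divModEquiv u with he
  have hHs : Summable (fun p : ℕ × Fin u => G p.1) := by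
    rw [summable_prod_of_nonneg (fun p => hG0 p.1)]
    exact ⟨fun x => Summable.of_finite, by
      simpa [tsum_fintype, Finset.sum_const, nsmul_eq_mul] using hGs.mul_left (u : ℝ)⟩
  have hcomp : Summable (fun i : ℕ => G ((e i).1)) := by
    have := (e.summable_iff (f := fun p : ℕ × Fin u => G p.1)).2 hHs
    exact this
  have hfst : ∀ i : ℕ, (e i).1 = i / u := fun i => rfl
  have hsum_h : Summable h :=
    Summable.of_nonneg_of_le hh0 (fun i => by rw [hfst i]; exact hhle i) hcomp
  refine ⟨hsum_h, ?_⟩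
  have h1 : ∑' i, h i ≤ ∑' i, G ((e i).1) :=
    Summable.tsum_le_tsum (fun i => by rw [hfst]; exact hhle i) hsum_h hcomp
  have h2 : ∑' i, G ((e i).1) = ∑' p : ℕ × Fin u, G p.1 := e.tsum_eq (f := fun p : ℕ × Fin u => G p.1)
  have h3 : ∑' p : ℕ × Fin u, G p.1 = ∑' j : ℕ, ∑' _ : Fin u, G j := Summable.tsum_prod' hHs (fun b => Summable.of_finite)
  have h4 : (∑' j : ℕ, ∑' _ : Fin u, G j) = ∑' j : ℕ, (u : ℝ) * G j := by
    congr 1; funext j; simp [tsum_fintype, Finset.sum_const, mul_comm]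
  calc ∑' i, h i ≤ ∑' i, G ((e i).1) := h1
    _ = ∑' j : ℕ, (u:ℝ) * G j := by rw [h2, h3, h4]
    _ = u * ∑' j, G j := tsum_mul_left


lemma aux_potter (ξ : ℝ) (hξ : 0 < ξ) (F : ℝ → ℝ)
    (hFpos : ∀ x ≥ (0:ℝ), 0 < F x)
    (hFanti : AntitoneOn F (Set.Ici 0))
    (hRV : ∀ x ≥ (1:ℝ), Filter.Tendsto (fun u : ℝ => F (u * x) / F u)
      Filter.atTop (nhds (x ^ (-1/ξ - 1))))
    {ε : ℝ} (hε1 : 1 < ε) (hεα : ε < 1/ξ + 1) :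
    ∃ u₀ : ℝ, 1 ≤ u₀ ∧ ∀ u ≥ u₀, ∀ x ≥ (1:ℝ),
      F (u * x) ≤ 2 ^ ε * x ^ (-ε) * F u := by
  have h2 : (2:ℝ) ^ (-1/ξ - 1) < 2 ^ (-ε) := by
    apply Real.rpow_lt_rpow_of_exponent_lt one_lt_two
    have h : -1/ξ - 1 = -(1/ξ + 1) := by ring
    rw [h]; linarith
  have hev : ∀ᶠ u : ℝ in atTop, F (u * 2) / F u < 2 ^ (-ε) :=
    (hRV 2 one_le_two).eventually_lt_const h2
  obtain ⟨u₁, hu₁⟩ := eventually_atTop.1 hev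
  refine ⟨max u₁ 1, le_max_right _ _, ?_⟩
  set u₀ := max u₁ 1 with hu₀def
  have hu₀1 : (1:ℝ) ≤ u₀ := le_max_right _ _
  have hstep : ∀ u ≥ u₀, F (u * 2) ≤ 2 ^ (-ε) * F u := by
    intro u hu
    have hFu : 0 < F u := hFpos u (by linarith [le_trans hu₀1 hu])
    have := hu₁ u (le_trans (le_max_left _ _) hu)
    calc F (u * 2) = F (u * 2) / F u * F u := by field_simp
      _ ≤ 2 ^ (-ε) * F u := by
          apply mul_le_mul_of_nonneg_right this.le hFu.le
  have hiter : ∀ n : ℕ, ∀ u ≥ u₀, F (u * 2 ^ n) ≤ ((2:ℝ) ^ n) ^ (-ε) * F u := by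
    intro n
    induction n with
    | zero => intro u hu; simp
    | succ n ih =>
      intro u hu
      have hu2 : u * 2 ≥ u₀ := by nlinarith [le_trans hu₀1 hu]
      have h1 : F (u * 2 ^ (n+1)) = F ((u * 2) * 2 ^ n) := by ring_nf
      have h2' := ih (u * 2) hu2
      have h3 := hstep u hu
      have hnn : (0:ℝ) ≤ ((2:ℝ) ^ n) ^ (-ε) := Real.rpow_nonneg (by positivity) _
      calc F (u * 2 ^ (n+1)) = F ((u * 2) * 2 ^ n) := h1
        _ ≤ ((2:ℝ) ^ n) ^ (-ε) * F (u * 2) := h2'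
        _ ≤ ((2:ℝ) ^ n) ^ (-ε) * (2 ^ (-ε) * F u) := by
            exact mul_le_mul_of_nonneg_left h3 hnn
        _ = ((2:ℝ) ^ (n+1)) ^ (-ε) * F u := by
            rw [pow_succ, Real.mul_rpow (by positivity) (by norm_num)]
            ring
  intro u hu x hx
  have hx0 : (0:ℝ) < x := by linarith
  have hu1 : (1:ℝ) ≤ u := le_trans hu₀1 hu
  have hu0 : (0:ℝ) < u := by linarith
  set n := Nat.floor (Real.logb 2 x) with hn
  have hlogb : (0:ℝ) ≤ Real.logb 2 x := Real.logb_nonneg one_lt_two hx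
  have hn1 : (2:ℝ) ^ n ≤ x := by
    calc (2:ℝ) ^ n = (2:ℝ) ^ (n:ℝ) := (Real.rpow_natCast 2 n).symm
      _ ≤ (2:ℝ) ^ Real.logb 2 x :=
          Real.rpow_le_rpow_of_exponent_le one_le_two (Nat.floor_le hlogb)
      _ = x := Real.rpow_logb two_pos (by norm_num) hx0
  have hn2 : x < (2:ℝ) ^ (n + 1) := by
    calc x = (2:ℝ) ^ Real.logb 2 x := (Real.rpow_logb two_pos (by norm_num) hx0).symm
      _ < (2:ℝ) ^ ((n:ℝ) + 1) :=
          Real.rpow_lt_rpow_of_exponent_lt one_lt_two (Nat.lt_floor_add_one _)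
      _ = (2:ℝ) ^ (n + 1) := by
          rw [← Real.rpow_natCast 2 (n+1)]; push_cast; ring_nf
  have hanti : F (u * x) ≤ F (u * 2 ^ n) := by
    apply hFanti (by positivity : (0:ℝ) ≤ u * 2 ^ n) ?_ ?_
    · exact Set.mem_Ici.2 (by positivity)
    · nlinarith
  have hFu : 0 < F u := hFpos u (by linarith)
  have hrp : ((2:ℝ) ^ n) ^ (-ε) ≤ (x / 2) ^ (-ε) := by
    apply Real.rpow_le_rpow_of_nonpos (by positivity) (by nlinarith [pow_succ (2:ℝ) n]) (by linarith)
  have heq : (x / 2) ^ (-ε) = 2 ^ ε * x ^ (-ε) := by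
    rw [Real.div_rpow hx0.le (by norm_num : (0:ℝ) ≤ 2),
      Real.rpow_neg (by norm_num : (0:ℝ) ≤ 2)]
    field_simp
  calc F (u * x) ≤ F (u * 2 ^ n) := hanti
    _ ≤ ((2:ℝ) ^ n) ^ (-ε) * F u := hiter n u hu
    _ ≤ (x / 2) ^ (-ε) * F u := mul_le_mul_of_nonneg_right hrp hFu.le
    _ = 2 ^ ε * x ^ (-ε) * F u := by rw [heq]


lemma aux_unif (ξ : ℝ) (F : ℝ → ℝ)
    (hFpos : ∀ x ≥ (0:ℝ), 0 < F x)
    (hFanti : AntitoneOn F (Set.Ici 0))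
    (hRV : ∀ x ≥ (1:ℝ), Filter.Tendsto (fun u : ℝ => F (u * x) / F u)
      Filter.atTop (nhds (x ^ (-1/ξ - 1))))
    (M : ℝ) (hM : 1 ≤ M) {δ : ℝ} (hδ : 0 < δ) :
    ∀ᶠ u : ℝ in atTop, ∀ x, 1 ≤ x → x ≤ M →
      |F (u * x) / F u - x ^ (-1/ξ - 1)| ≤ δ := by
  set q : ℝ := -1/ξ - 1 with hq
  set g : ℝ → ℝ := fun x => x ^ q with hg
  have hgc : ContinuousOn g (Set.Icc 1 (M + 1)) := by
    intro x hx
    have hx0 : x ≠ 0 := by have := hx.1; intro h; rw [h] at this; linarith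
    exact (Real.continuousAt_rpow_const x q (Or.inl hx0)).continuousWithinAt
  have hUC := (isCompact_Icc : IsCompact (Set.Icc (1:ℝ) (M+1))).uniformContinuousOn_of_continuous hgc
  rw [Metric.uniformContinuousOn_iff] at hUC
  obtain ⟨η, hη, hUC⟩ := hUC (δ/2) (by linarith)
  set η' : ℝ := min (η/2) 1 with hη'def
  have hη'pos : 0 < η' := lt_min (by linarith) one_pos
  have hη'1 : η' ≤ 1 := min_le_right _ _
  have hη'η : η' < η := lt_of_le_of_lt (min_le_left _ _) (by linarith)
  set n : ℕ := Nat.ceil ((M - 1) / η') with hn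
  set t : ℕ → ℝ := fun j => 1 + j * η' with ht
  have hev1 : ∀ᶠ u : ℝ in atTop, ∀ j ∈ Finset.range (n + 2),
      |F (u * t j) / F u - g (t j)| < δ / 2 := by
    rw [eventually_all_finset]
    intro j _
    have h1j : (1:ℝ) ≤ t j := by
      have : (0:ℝ) ≤ (j:ℝ) * η' := by positivity
      simp only [ht]; linarith
    have h2 := Metric.tendsto_nhds.mp (hRV (t j) h1j) (δ/2) (by linarith)
    filter_upwards [h2] with u hu
    rwa [Real.dist_eq] at hu
  filter_upwards [hev1, eventually_ge_atTop (1:ℝ)] with u hu hu1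
  intro x hx1 hxM
  have hu0 : (0:ℝ) < u := by linarith
  have hFu : 0 < F u := hFpos u (by linarith)
  set j : ℕ := Nat.floor ((x - 1) / η') with hj
  have hxnn : 0 ≤ (x - 1) / η' := div_nonneg (by linarith) hη'pos.le
  have htj_le : t j ≤ x := by
    have h1 : (j:ℝ) ≤ (x - 1) / η' := Nat.floor_le hxnn
    have h2 : (j:ℝ) * η' ≤ x - 1 := by
      rw [← le_div_iff₀ hη'pos]; exact h1
    simp only [ht]; linarith
  have hx_lt : x < t (j + 1) := by
    have h1 : (x - 1) / η' < (j:ℝ) + 1 := Nat.lt_floor_add_one _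
    have h2 : x - 1 < ((j:ℝ) + 1) * η' := by
      rw [← div_lt_iff₀ hη'pos]; exact h1
    simp only [ht]; push_cast; linarith
  have hjn : j ≤ n := by
    have h1 : (x - 1) / η' ≤ (M - 1) / η' := by
      have hxM' : x - 1 ≤ M - 1 := by linarith
      gcongr
    calc j = Nat.floor ((x-1)/η') := hj
      _ ≤ Nat.floor ((M-1)/η') := Nat.floor_le_floor h1
      _ ≤ n := Nat.floor_le_ceil _
  have hjm : j ∈ Finset.range (n + 2) := Finset.mem_range.2 (by omega)
  have hjm1 : j + 1 ∈ Finset.range (n + 2) := Finset.mem_range.2 (by omega)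
  -- memberships in Icc 1 (M+1)
  have htj1 : (1:ℝ) ≤ t j := by
    have : (0:ℝ) ≤ (j:ℝ) * η' := by positivity
    simp only [ht]; linarith
  have htj_mem : t j ∈ Set.Icc (1:ℝ) (M+1) := ⟨htj1, by linarith⟩
  have hx_mem : x ∈ Set.Icc (1:ℝ) (M+1) := ⟨hx1, by linarith⟩
  have htj1' : t (j+1) = t j + η' := by simp only [ht]; push_cast; ring
  have htj1_mem : t (j+1) ∈ Set.Icc (1:ℝ) (M+1) := by
    constructor
    · rw [htj1']; linarith
    · rw [htj1']; linarith
  -- distances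
  have hd1 : dist (t j) x < η := by
    rw [Real.dist_eq, abs_sub_lt_iff]
    constructor
    · linarith
    · have := hx_lt; rw [htj1'] at this; linarith
  have hd2 : dist (t (j+1)) x < η := by
    rw [Real.dist_eq, abs_sub_lt_iff]
    constructor
    · rw [htj1']; linarith
    · rw [htj1']; linarith
  have hg1 : |g (t j) - g x| < δ/2 := by
    have := hUC (t j) htj_mem x hx_mem hd1
    rwa [Real.dist_eq] at this
  have hg2 : |g (t (j+1)) - g x| < δ/2 := by
    have := hUC (t (j+1)) htj1_mem x hx_mem hd2
    rwa [Real.dist_eq] at this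
  have hF1 : F (u * x) ≤ F (u * t j) := by
    apply hFanti (Set.mem_Ici.2 (by positivity : (0:ℝ) ≤ u * t j))
      (Set.mem_Ici.2 (by positivity : (0:ℝ) ≤ u * x))
    nlinarith
  have hF2 : F (u * t (j+1)) ≤ F (u * x) := by
    apply hFanti (Set.mem_Ici.2 (by positivity : (0:ℝ) ≤ u * x))
      (Set.mem_Ici.2 (by positivity))
    nlinarith [hx_lt.le]
  have hb1 := abs_lt.1 (hu j hjm)
  have hb2 := abs_lt.1 (hu (j+1) hjm1)
  have hga := abs_lt.1 hg1
  have hgb := abs_lt.1 hg2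
  have hdiv1 : F (u * x) / F u ≤ F (u * t j) / F u := by gcongr
  have hdiv2 : F (u * t (j+1)) / F u ≤ F (u * x) / F u := by gcongr
  rw [abs_le]
  constructor
  · linarith [hb2.1, hgb.1]
  · linarith [hb1.2, hga.2]

/-- summability of the GZD-type series -/
lemma aux_sumB {q : ℝ} (hq : q < -1) (u : ℕ) (hu : 1 ≤ u) :
    Summable (fun i : ℕ => (1 + (i:ℝ)/(u:ℝ)) ^ q) := by
  have hu0 : (0:ℝ) < u := by exact_mod_cast hu
  have hG : Summable (fun j : ℕ => (1 + (j:ℝ)) ^ q) := by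
    have := aux_summable_one_add_rpow (η := -q) (by linarith)
    simpa [neg_neg] using this
  refine (aux_block u hu (fun j => (1 + (j:ℝ)) ^ q)
    (fun j => Real.rpow_nonneg (by positivity) _) hG _
    (fun i => Real.rpow_nonneg (by positivity) _) ?_).1
  intro i
  apply Real.rpow_le_rpow_of_nonpos (by positivity) ?_ (by linarith : q ≤ 0)
  have := Nat.cast_div_le (m := i) (n := u) (α := ℝ)
  linarith

set_option maxHeartbeats 1000000 in
/-- key estimate: difference of normalized tail sums is `o(u)`. -/
lemma aux_key (ξ : ℝ) (hξ : 0 < ξ) (F : ℝ → ℝ)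
    (hFpos : ∀ x ≥ (0:ℝ), 0 < F x)
    (hFanti : AntitoneOn F (Set.Ici 0))
    (hRV : ∀ x ≥ (1:ℝ), Filter.Tendsto (fun u : ℝ => F (u * x) / F u)
      Filter.atTop (nhds (x ^ (-1/ξ - 1))))
    (hsum_F : ∀ᶠ u : ℕ in atTop, Summable (fun i : ℕ => F ((u:ℝ) + i)))
    {δ : ℝ} (hδ : 0 < δ) :
    ∀ᶠ u : ℕ in atTop,
      |(∑' i : ℕ, F ((u:ℝ) + i)) / F u - ∑' i : ℕ, (1 + (i:ℝ)/(u:ℝ)) ^ (-1/ξ - 1)| ≤ δ * u := by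
  have hξ' : 0 < 1/ξ := by positivity
  set q : ℝ := -1/ξ - 1 with hqdef
  have hq : q < -1 := by
    rw [hqdef]
    have : -1/ξ = -(1/ξ) := by ring
    rw [this]; linarith
  have hq0 : q < 0 := by linarith
  set ε : ℝ := (1/ξ + 2)/2 with hεdef
  have hε1 : 1 < ε := by rw [hεdef]; linarith
  have hεα : ε < 1/ξ + 1 := by rw [hεdef]; linarith
  have hqε : q ≤ -ε := by
    rw [hqdef, hεdef]
    have : -1/ξ = -(1/ξ) := by ring
    rw [this]; linarith
  have h2ε0 : (0:ℝ) ≤ 2 ^ ε := by positivity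
  obtain ⟨u₀, hu₀1, hpot⟩ := aux_potter ξ hξ F hFpos hFanti hRV hε1 hεα
  set g : ℕ → ℝ := fun j => (1 + (j:ℝ)) ^ (-ε) with hgdef
  have hgs : Summable g := aux_summable_one_add_rpow hε1
  have hg0 : ∀ j, 0 ≤ g j := fun j => Real.rpow_nonneg (by positivity) _
  have h2ε : (0:ℝ) < 2 ^ ε + 1 := by positivity
  have htail := tendsto_sum_nat_add g
  have hNev : ∀ᶠ m : ℕ in atTop, (∑' j, g (j + m)) < δ / (2 * (2 ^ ε + 1)) :=
    htail.eventually_lt_const (by positivity)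
  obtain ⟨N₀, hN₀⟩ := eventually_atTop.1 hNev
  set N : ℕ := max N₀ 1 with hNdef
  have hN1 : 1 ≤ N := le_max_right _ _
  have hNtail : (∑' j, g (j + N)) < δ / (2 * (2 ^ ε + 1)) := hN₀ N (le_max_left _ _)
  set δ₁ : ℝ := δ / (2 * N) with hδ₁def
  have hδ₁ : 0 < δ₁ := by
    apply div_pos hδ
    have : (0:ℝ) < N := by exact_mod_cast hN1
    linarith
  have hunif := aux_unif ξ F hFpos hFanti hRV ((N:ℝ) + 1)
    (by have : (1:ℝ) ≤ N := by exact_mod_cast hN1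
        linarith) hδ₁
  filter_upwards [tendsto_natCast_atTop_atTop.eventually hunif,
    tendsto_natCast_atTop_atTop.eventually (eventually_ge_atTop u₀),
    eventually_ge_atTop 1, hsum_F] with u huni hu₀ hu1 hsFu
  have hu0 : (0:ℝ) < u := by exact_mod_cast hu1
  have hFu : 0 < F u := hFpos u hu0.le
  set a : ℕ → ℝ := fun i => F ((u:ℝ) + i) / F u with hadef
  set b : ℕ → ℝ := fun i => (1 + (i:ℝ)/(u:ℝ)) ^ q with hbdef
  have hsa : Summable a := hsFu.div_const _
  have hsb : Summable b := aux_sumB hq u hu1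
  have ha0 : ∀ i, 0 ≤ a i := fun i => by
    have := hFpos ((u:ℝ) + i) (by positivity)
    positivity
  have hb0 : ∀ i, 0 ≤ b i := fun i => Real.rpow_nonneg (by positivity) _
  have hSFdiv : (∑' i : ℕ, F ((u:ℝ) + i)) / F u = ∑' i, a i := by
    rw [hadef]; rw [tsum_div_const]
  have hd : Summable (fun i => |a i - b i|) := (hsa.sub hsb).abs
  have habs : |(∑' i : ℕ, F ((u:ℝ) + i)) / F u - ∑' i, b i| ≤ ∑' i, |a i - b i| := by
    rw [hSFdiv, ← Summable.tsum_sub hsa hsb]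
    have := norm_tsum_le_tsum_norm (f := fun i => a i - b i)
      (by simpa [Real.norm_eq_abs] using hd)
    simpa [Real.norm_eq_abs] using this
  set m : ℕ := N * u with hmdef
  have hsplit : ∑' i, |a i - b i| =
      (∑ i ∈ Finset.range m, |a i - b i|) + ∑' i, |a (i + m) - b (i + m)| :=
    (Summable.sum_add_tsum_nat_add m hd).symm
  -- head bound
  have hhead : (∑ i ∈ Finset.range m, |a i - b i|) ≤ δ / 2 * u := by
    have hterm : ∀ i ∈ Finset.range m, |a i - b i| ≤ δ₁ := by
      intro i hi
      have him : i < m := Finset.mem_range.1 hi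
      set x : ℝ := 1 + (i:ℝ)/u with hxdef
      have hx1 : (1:ℝ) ≤ x := by
        have : (0:ℝ) ≤ (i:ℝ)/u := by positivity
        rw [hxdef]; linarith
      have hxM : x ≤ (N:ℝ) + 1 := by
        have h1 : (i:ℝ) < (N:ℝ) * u := by
          have : (i:ℝ) < (m:ℝ) := by exact_mod_cast him
          rw [hmdef] at this; push_cast at this; linarith
        have h2 : (i:ℝ)/u ≤ (N:ℝ) := by
          rw [div_le_iff₀ hu0]; linarith
        rw [hxdef]; linarith
      have := huni x hx1 hxM
      have hux : (u:ℝ) * x = (u:ℝ) + i := by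
        rw [hxdef]; field_simp
      rw [hux] at this
      exact this
    calc (∑ i ∈ Finset.range m, |a i - b i|) ≤ ∑ i ∈ Finset.range m, δ₁ :=
          Finset.sum_le_sum hterm
      _ = m * δ₁ := by rw [Finset.sum_const, Finset.card_range, nsmul_eq_mul]
      _ = δ / 2 * u := by
          have hNne : ((N:ℝ)) ≠ 0 := by
            have : (0:ℝ) < N := by exact_mod_cast hN1
            linarith
          rw [hδ₁def, hmdef]
          push_cast
          field_simp
  -- tail bound
  have htailb : (∑' i, |a (i + m) - b (i + m)|) ≤ δ / 2 * u := by
    set h : ℕ → ℝ := fun i => (1 + (N:ℝ) + (i:ℝ)/u) ^ (-ε) with hhdef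
    have hbase : ∀ i : ℕ, 1 + ((i + m : ℕ):ℝ)/(u:ℝ) = 1 + (N:ℝ) + (i:ℝ)/u := by
      intro i
      rw [hmdef]
      push_cast
      field_simp
      ring
    have hy1 : ∀ i : ℕ, (1:ℝ) ≤ 1 + (N:ℝ) + (i:ℝ)/u := by
      intro i
      have h1 : (0:ℝ) ≤ (i:ℝ)/u := by positivity
      have h2 : (0:ℝ) ≤ (N:ℝ) := by positivity
      linarith
    have hh0 : ∀ i, 0 ≤ h i := fun i => Real.rpow_nonneg (by linarith [hy1 i]) _
    have hbb : ∀ i : ℕ, b (i + m) ≤ h i := by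
      intro i
      show (1 + ((i + m : ℕ):ℝ)/(u:ℝ)) ^ q ≤ _
      rw [hbase i]
      exact Real.rpow_le_rpow_of_exponent_le (hy1 i) hqε
    have hab : ∀ i : ℕ, a (i + m) ≤ 2 ^ ε * h i := by
      intro i
      show F ((u:ℝ) + (i + m : ℕ)) / F u ≤ _
      have huy : (u:ℝ) + ((i + m : ℕ):ℝ) = (u:ℝ) * (1 + (N:ℝ) + (i:ℝ)/u) := by
        rw [hmdef]; push_cast; field_simp; ring
      rw [huy, div_le_iff₀ hFu]
      have := hpot u hu₀ (1 + (N:ℝ) + (i:ℝ)/u) (hy1 i)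
      calc F ((u:ℝ) * (1 + (N:ℝ) + (i:ℝ)/u)) ≤
          2 ^ ε * (1 + (N:ℝ) + (i:ℝ)/u) ^ (-ε) * F u := this
        _ = 2 ^ ε * h i * F u := rfl
    have hpoint : ∀ i : ℕ, |a (i + m) - b (i + m)| ≤ (2 ^ ε + 1) * h i := by
      intro i
      have h1 := ha0 (i + m)
      have h2 := hbb i
      have h3 := hb0 (i + m)
      have h4 := hab i
      have h5 : 0 ≤ 2 ^ ε * h i := mul_nonneg h2ε0 (hh0 i)
      rw [abs_le]
      constructor
      · nlinarith [hh0 i]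
      · nlinarith [hh0 i]
    have hGshift : Summable (fun j : ℕ => g (N + j)) :=
      ((summable_nat_add_iff N).2 hgs).congr (fun j => by rw [add_comm])
    have hle : ∀ i : ℕ, h i ≤ (fun j => g (N + j)) (i / u) := by
      intro i
      show (1 + (N:ℝ) + (i:ℝ)/u) ^ (-ε) ≤ (1 + ((N + i/u : ℕ):ℝ)) ^ (-ε)
      apply Real.rpow_le_rpow_of_nonpos (by positivity) ?_ (by linarith : -ε ≤ 0)
      have := Nat.cast_div_le (m := i) (n := u) (α := ℝ)
      push_cast
      linarith
    have hblock := aux_block u hu1 (fun j => g (N + j)) (fun j => hg0 _) hGshift h hh0 hle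
    have hsL : Summable (fun i => |a (i + m) - b (i + m)|) :=
      (summable_nat_add_iff m).2 hd
    calc (∑' i, |a (i + m) - b (i + m)|) ≤ ∑' i, (2 ^ ε + 1) * h i :=
          Summable.tsum_le_tsum hpoint hsL (hblock.1.mul_left _)
      _ = (2 ^ ε + 1) * ∑' i, h i := tsum_mul_left
      _ ≤ (2 ^ ε + 1) * ((u:ℝ) * ∑' j, g (N + j)) :=
          mul_le_mul_of_nonneg_left hblock.2 h2ε.le
      _ = (2 ^ ε + 1) * ((u:ℝ) * ∑' j, g (j + N)) := by
          rw [tsum_congr (fun j => by rw [add_comm] : ∀ j : ℕ, g (N + j) = g (j + N))]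
      _ ≤ (2 ^ ε + 1) * ((u:ℝ) * (δ / (2 * (2 ^ ε + 1)))) := by
          apply mul_le_mul_of_nonneg_left ?_ h2ε.le
          apply mul_le_mul_of_nonneg_left hNtail.le hu0.le
      _ = δ / 2 * u := by field_simp
  calc |(∑' i : ℕ, F ((u:ℝ) + i)) / F u - ∑' i, b i| ≤ ∑' i, |a i - b i| := habs
    _ = _ := hsplit
    _ ≤ δ / 2 * u + δ / 2 * u := add_le_add hhead htailb
    _ = δ * u := by ring


lemma aux_tendsto_one {f : ℕ → ℝ} (h : ∀ δ > (0:ℝ), ∀ᶠ u in atTop, |f u - 1| ≤ δ) :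
    Tendsto f atTop (nhds 1) := by
  rw [Metric.tendsto_nhds]
  intro ε hε
  filter_upwards [h (ε/2) (by linarith)] with u hu
  rw [Real.dist_eq]
  linarith

set_option maxHeartbeats 1000000 in
/-- If `F̄` is positive, nonincreasing on `[0,∞)` and regularly varying with
index `-1/ξ - 1` (`ξ > 0`), and `p` is a probability mass function on `ℕ` with
`p(k) = c·F̄(k)` for `k ≥ d`, then for any sequence `k_u ∈ ℕ` with `sup_u k_u/u < ∞`,
`[p(u + k_u)/∑_{i=u}^∞ p(i)] / p_GZD(k_u; ξu, ξ) → 1` as `u → ∞` over the positive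
integers. -/
theorem exceedance_pmf_ratio_GZD_tendsto_one (ξ : ℝ) (hξ : 0 < ξ) (F : ℝ → ℝ)
    (hFpos : ∀ x ≥ (0:ℝ), 0 < F x)
    (hFanti : AntitoneOn F (Set.Ici 0))
    (hRV : ∀ x ≥ (1:ℝ), Filter.Tendsto (fun u : ℝ => F (u * x) / F u)
      Filter.atTop (nhds (x ^ (-1/ξ - 1))))
    (p : ℕ → ℝ) (hppos : ∀ k, 0 < p k) (hpsum : ∑' k : ℕ, p k = 1)
    (c : ℝ) (hc : 0 < c) (d : ℕ) (hpF : ∀ k ≥ d, p k = c * F k)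
    (k : ℕ → ℕ) (C : ℝ) (hk : ∀ u : ℕ, 1 ≤ u → (k u : ℝ) / u ≤ C) :
    Filter.Tendsto
      (fun u : ℕ => (p (u + k u) / ∑' i : ℕ, p (u + i)) / pGZD (ξ * u) ξ (k u))
      Filter.atTop (nhds 1) := by
  have hξ' : 0 < 1/ξ := by positivity
  set q : ℝ := -1/ξ - 1 with hqdef
  have hq : q < -1 := by
    rw [hqdef]
    have h : -1/ξ = -(1/ξ) := by ring
    rw [h]; linarith
  have hq0 : q < 0 := by linarith
  have hps : Summable p := by
    by_contra h
    rw [tsum_eq_zero_of_not_summable h] at hpsum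
    norm_num at hpsum
  have hC0 : 0 ≤ C := le_trans (by positivity : (0:ℝ) ≤ (k 1 : ℝ)/((1:ℕ):ℝ)) (hk 1 le_rfl)
  have hsum_p_tail : ∀ u : ℕ, Summable (fun i : ℕ => p (u + i)) := by
    intro u
    exact ((summable_nat_add_iff u).2 hps).congr (fun i => by rw [add_comm])
  set SF : ℕ → ℝ := fun u => ∑' i : ℕ, F ((u:ℝ) + i) with hSF
  set SB : ℕ → ℝ := fun u => ∑' i : ℕ, (1 + (i:ℝ)/(u:ℝ)) ^ q with hSB
  have hFval : ∀ u, d ≤ u → ∀ i : ℕ, F ((u:ℝ) + i) = p (u + i) / c := by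
    intro u hud i
    have h1 := hpF (u + i) (le_trans hud (Nat.le_add_right _ _))
    have h2 : ((u + i : ℕ) : ℝ) = (u:ℝ) + i := by push_cast; ring
    rw [← h2, h1, mul_div_cancel_left₀ _ hc.ne']
  have hsum_F : ∀ u, d ≤ u → Summable (fun i : ℕ => F ((u:ℝ) + i)) := by
    intro u hud
    exact ((hsum_p_tail u).div_const c).congr (fun i => (hFval u hud i).symm)
  have hSF_eq : ∀ u, d ≤ u → SF u = (∑' i, p (u + i)) / c := by
    intro u hud
    rw [hSF]
    simp only
    rw [tsum_congr (hFval u hud), tsum_div_const]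
  have hsum_F_ev : ∀ᶠ u : ℕ in atTop, Summable (fun i : ℕ => F ((u:ℝ) + i)) :=
    eventually_atTop.2 ⟨d, hsum_F⟩
  -- Part A : pointwise numerator ratio
  have hA : Tendsto (fun u : ℕ =>
      (F ((u:ℝ) + (k u : ℕ)) / F u) / ((1 + (k u : ℝ)/(u:ℝ)) ^ q)) atTop (nhds 1) := by
    apply aux_tendsto_one
    intro δ0 hδ0
    have hCpow : 0 < (1+C) ^ q := Real.rpow_pos_of_pos (by linarith) _
    have hδ' : 0 < δ0 * (1+C)^q := by positivity
    have hunif := aux_unif ξ F hFpos hFanti hRV (1+C) (by linarith) hδ'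
    filter_upwards [tendsto_natCast_atTop_atTop.eventually hunif,
      eventually_ge_atTop 1] with u huni hu1
    have hu0 : (0:ℝ) < u := by exact_mod_cast hu1
    set x : ℝ := 1 + (k u : ℝ)/(u:ℝ) with hxdef
    have hx1 : (1:ℝ) ≤ x := by
      have : (0:ℝ) ≤ (k u : ℝ)/u := by positivity
      rw [hxdef]; linarith
    have hxM : x ≤ 1 + C := by
      have := hk u hu1
      rw [hxdef]; linarith
    have h1 := huni x hx1 hxM
    have hux : (u:ℝ) * x = (u:ℝ) + (k u : ℕ) := by
      rw [hxdef]; field_simp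
    rw [hux] at h1
    have hxq_pos : 0 < x ^ q := Real.rpow_pos_of_pos (by linarith) _
    have hxq_ge : (1+C) ^ q ≤ x ^ q :=
      Real.rpow_le_rpow_of_nonpos (by linarith) hxM hq0.le
    have heq : (F ((u:ℝ) + (k u : ℕ)) / F u) / x ^ q - 1 =
        (F ((u:ℝ) + (k u : ℕ)) / F u - x ^ q) / x ^ q := by
      rw [sub_div, div_self hxq_pos.ne']
    rw [heq, abs_div, abs_of_pos hxq_pos, div_le_iff₀ hxq_pos]
    calc |F ((u:ℝ) + (k u : ℕ)) / F u - x ^ q| ≤ δ0 * (1+C)^q := h1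
      _ ≤ δ0 * x ^ q := by
          apply mul_le_mul_of_nonneg_left hxq_ge hδ0.le
  -- Part B : sum ratio
  have hB : Tendsto (fun u : ℕ => SB u * F u / SF u) atTop (nhds 1) := by
    apply aux_tendsto_one
    intro δ0 hδ0
    have h2q : (0:ℝ) < 2 ^ q := Real.rpow_pos_of_pos two_pos _
    have hδpos : 0 < min (δ0 * (2^q/2)) (2^q/2) := by positivity
    filter_upwards [aux_key ξ hξ F hFpos hFanti hRV hsum_F_ev hδpos,
      eventually_ge_atTop 1, eventually_ge_atTop d] with u hkey hu1 hud
    have hu0 : (0:ℝ) < u := by exact_mod_cast hu1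
    have hFu : 0 < F u := hFpos u hu0.le
    have hsb : Summable (fun i : ℕ => (1 + (i:ℝ)/(u:ℝ)) ^ q) := aux_sumB hq u hu1
    -- lower bound on SB u
    have hSBlow : (u:ℝ) * 2 ^ q ≤ SB u := by
      have hterm : ∀ i ∈ Finset.range u, (2:ℝ) ^ q ≤ (1 + (i:ℝ)/(u:ℝ)) ^ q := by
        intro i hi
        have hiu : (i:ℝ) < u := by exact_mod_cast Finset.mem_range.1 hi
        apply Real.rpow_le_rpow_of_nonpos (by positivity) ?_ hq0.le
        have : (i:ℝ)/u ≤ 1 := by rw [div_le_one hu0]; linarith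
        linarith
      calc (u:ℝ) * 2 ^ q = ∑ i ∈ Finset.range u, (2:ℝ) ^ q := by
            rw [Finset.sum_const, Finset.card_range, nsmul_eq_mul]
        _ ≤ ∑ i ∈ Finset.range u, (1 + (i:ℝ)/(u:ℝ)) ^ q := Finset.sum_le_sum hterm
        _ ≤ SB u := Summable.sum_le_tsum _ (fun i _ => Real.rpow_nonneg (by positivity) _) hsb
    have hkey' : |SF u / F u - SB u| ≤ min (δ0 * (2^q/2)) (2^q/2) * u := hkey
    have habs := abs_le.1 hkey'
    have hmin1 : min (δ0 * (2^q/2)) (2^q/2) * u ≤ (2^q/2) * u := by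
      apply mul_le_mul_of_nonneg_right (min_le_right _ _) hu0.le
    have hmin2 : min (δ0 * (2^q/2)) (2^q/2) * u ≤ δ0 * (2^q/2) * u := by
      apply mul_le_mul_of_nonneg_right (min_le_left _ _) hu0.le
    have hSFlow : (u:ℝ) * (2^q/2) ≤ SF u / F u := by nlinarith
    have hSFFpos : 0 < SF u / F u := lt_of_lt_of_le (by positivity) hSFlow
    have hSFpos : 0 < SF u := by
      by_contra h
      push_neg at h
      nlinarith [div_nonpos_of_nonpos_of_nonneg h hFu.le]
    have heq : SB u * F u / SF u - 1 = (SB u - SF u / F u) / (SF u / F u) := by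
      rw [sub_div, div_self hSFFpos.ne', div_div_eq_mul_div]
    rw [heq, abs_div, abs_of_pos hSFFpos, div_le_iff₀ hSFFpos]
    calc |SB u - SF u / F u| = |SF u / F u - SB u| := abs_sub_comm _ _
      _ ≤ min (δ0 * (2^q/2)) (2^q/2) * u := hkey'
      _ ≤ δ0 * ((u:ℝ) * (2^q/2)) := by nlinarith
      _ ≤ δ0 * (SF u / F u) := by
          apply mul_le_mul_of_nonneg_left hSFlow hδ0.le
  -- combine
  have hmul : Tendsto (fun u : ℕ =>
      ((F ((u:ℝ) + (k u : ℕ)) / F u) / ((1 + (k u : ℝ)/(u:ℝ)) ^ q)) *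
        (SB u * F u / SF u)) atTop (nhds 1) := by
    have := hA.mul hB
    simpa using this
  apply Tendsto.congr' ?_ hmul
  filter_upwards [eventually_ge_atTop 1, eventually_ge_atTop d] with u hu1 hud
  have hu0 : (0:ℝ) < u := by exact_mod_cast hu1
  have hFu : 0 < F u := hFpos u hu0.le
  have hsb : Summable (fun i : ℕ => (1 + (i:ℝ)/(u:ℝ)) ^ q) := aux_sumB hq u hu1
  have hSBpos : 0 < SB u := by
    refine Summable.tsum_pos hsb (fun i => Real.rpow_nonneg (by positivity) _) 0 ?_
    norm_num
  have hSFpos : 0 < SF u := by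
    refine Summable.tsum_pos (hsum_F u hud) (fun i => (hFpos _ (by positivity)).le) 0 ?_
    exact hFpos _ (by positivity)
  have hpk : p (u + k u) = c * F ((u:ℝ) + (k u : ℕ)) := by
    have h1 := hpF (u + k u) (le_trans hud (Nat.le_add_right _ _))
    have h2 : ((u + k u : ℕ) : ℝ) = (u:ℝ) + (k u : ℕ) := by push_cast; ring
    rw [h1, h2]
  have hpt : (∑' i : ℕ, p (u + i)) = c * SF u := by
    rw [hSF_eq u hud]
    field_simp
  have hxq_pos : 0 < (1 + (k u : ℝ)/(u:ℝ)) ^ q := by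
    apply Real.rpow_pos_of_pos
    have : (0:ℝ) ≤ (k u : ℝ)/u := by positivity
    linarith
  have hGZD : pGZD (ξ * u) ξ (k u) = (1 + (k u : ℝ)/(u:ℝ)) ^ q / SB u := by
    unfold pGZD
    rw [← hqdef]
    have harg : ∀ j : ℕ, ξ * (j:ℝ) / (ξ * u) = (j:ℝ)/(u:ℝ) := by
      intro j
      rw [mul_div_mul_left _ _ hξ.ne']
    rw [harg (k u)]
    congr 1
    exact tsum_congr (fun i => by rw [harg i])
  have hFk_pos : 0 < F ((u:ℝ) + (k u : ℕ)) := hFpos _ (by positivity)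
  rw [hGZD, hpk, hpt]
  field_simp
end

section
/- Let ξ > 0 and let F̄ : [0,∞) → (0,∞) be a nonincreasing function satisfying F̄(ux)/F̄(u) → x^{−1/ξ−1} as u → ∞, for every real x ≥ 1. Then u^{−1} ∑_{i=0}^{∞} F̄(u + i)/F̄(u) → ξ as u → ∞. -/
/-!
Fix `x > 1` and cut `[u, ∞)` into the geometric blocks `[u xᵏ, u xᵏ⁺¹)`. By monotonicity block `k`
contributes between `(u xᵏ (x - 1) - 1) F(u xᵏ⁺¹)` and `(u xᵏ (x - 1) + 1) F(u xᵏ)`. Regular variation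
gives `F(u xᵏ) / F(u) → x^(ρk)` with `ρ = -1/ξ - 1`, and a single ratio `F(ux)/F(u) < q < 1/x` yields
the summable majorant `qᵏ`, so Tannery's theorem squeezes `u⁻¹ ∑ F(u + i) / F(u)` asymptotically
between `x^ρ M(x)` and `M(x) = (x - 1) / (1 - x^(ρ+1))`. As `x → 1⁺`, `M(x) → -1/(ρ + 1) = ξ`, the
reciprocal of the derivative of `1 - x^(ρ+1)` at `1`.
-/

open Filter Topology Finset

theorem Finset.sum_range_eq_sum_Ico_blocks {M : Type*} [AddCommMonoid M] (f : ℕ → M)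
    {n : ℕ → ℕ} (hn : Monotone n) (hn0 : n 0 = 0) (K : ℕ) :
    ∑ i ∈ range (n K), f i = ∑ k ∈ range K, ∑ i ∈ Ico (n k) (n (k + 1)), f i := by
  induction K with
  | zero => simp [hn0]
  | succ K ih => rw [sum_range_succ, ← ih, sum_range_add_sum_Ico f (hn K.le_succ)]

theorem hasSum_of_hasSum_Ico_blocks {f : ℕ → ℝ} (hf : ∀ i, 0 ≤ f i) {n : ℕ → ℕ}
    (hn : Monotone n) (hn0 : n 0 = 0) (hn_top : Tendsto n atTop atTop) {s : ℝ}
    (h : HasSum (fun k ↦ ∑ i ∈ Ico (n k) (n (k + 1)), f i) s) : HasSum f s := by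
  have hmono : Monotone fun N ↦ ∑ i ∈ range N, f i :=
    monotone_nat_of_le_succ fun N ↦ by simpa [sum_range_succ] using hf N
  rw [hasSum_iff_tendsto_nat_of_nonneg hf, tendsto_iff_tendsto_subseq_of_monotone hmono hn_top]
  simpa only [Function.comp_def, sum_range_eq_sum_Ico_blocks f hn hn0] using h.tendsto_sum_nat

section AntitoneOn

variable {φ : ℝ → ℝ} {a b : ℝ}

theorem sum_Ico_ceil_le_of_antitoneOn (hφ : AntitoneOn φ (Set.Ici 0))
    (hφ0 : ∀ t ≥ 0, 0 ≤ φ t) (ha : 0 ≤ a) (hab : a ≤ b) :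
    ∑ i ∈ Ico ⌈a⌉₊ ⌈b⌉₊, φ i ≤ (b - a + 1) * φ a := by
  have hcard : ((#(Ico ⌈a⌉₊ ⌈b⌉₊) : ℕ) : ℝ) ≤ b - a + 1 := by
    rw [Nat.card_Ico, Nat.cast_sub (Nat.ceil_mono hab)]
    linarith [Nat.ceil_lt_add_one (ha.trans hab), Nat.le_ceil a]
  calc ∑ i ∈ Ico ⌈a⌉₊ ⌈b⌉₊, φ i ≤ #(Ico ⌈a⌉₊ ⌈b⌉₊) • φ a :=
        sum_le_card_nsmul _ _ _ fun i hi ↦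
          hφ ha (Set.mem_Ici.2 (Nat.cast_nonneg i)) (Nat.ceil_le.1 (mem_Ico.1 hi).1)
    _ ≤ (b - a + 1) * φ a := by
        rw [nsmul_eq_mul]; exact mul_le_mul_of_nonneg_right hcard (hφ0 a ha)

theorem le_sum_Ico_ceil_of_antitoneOn (hφ : AntitoneOn φ (Set.Ici 0))
    (hφ0 : ∀ t ≥ 0, 0 ≤ φ t) (ha : 0 ≤ a) (hab : a ≤ b) :
    (b - a - 1) * φ b ≤ ∑ i ∈ Ico ⌈a⌉₊ ⌈b⌉₊, φ i := by
  have hcard : b - a - 1 ≤ ((#(Ico ⌈a⌉₊ ⌈b⌉₊) : ℕ) : ℝ) := by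
    rw [Nat.card_Ico, Nat.cast_sub (Nat.ceil_mono hab)]
    linarith [Nat.ceil_lt_add_one ha, Nat.le_ceil b]
  calc (b - a - 1) * φ b ≤ #(Ico ⌈a⌉₊ ⌈b⌉₊) • φ b := by
        rw [nsmul_eq_mul]; exact mul_le_mul_of_nonneg_right hcard (hφ0 b (ha.trans hab))
    _ ≤ ∑ i ∈ Ico ⌈a⌉₊ ⌈b⌉₊, φ i :=
        card_nsmul_le_sum _ _ _ fun i hi ↦
          hφ (Set.mem_Ici.2 (Nat.cast_nonneg i)) (ha.trans hab) (Nat.lt_ceil.1 (mem_Ico.1 hi).2).le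

end AntitoneOn

theorem tendsto_of_forall_eventually_squeeze {ι α β : Type*} [LinearOrder β]
    [TopologicalSpace β] [OrderTopology β] {p : Filter ι} [p.NeBot] {l : Filter α}
    {f : α → β} {L U : ι → β} {c : β} (hL : Tendsto L p (𝓝 c)) (hU : Tendsto U p (𝓝 c))
    (h : ∀ᶠ i in p, ∃ lo hi : α → β, Tendsto lo l (𝓝 (L i)) ∧ Tendsto hi l (𝓝 (U i)) ∧
      ∀ᶠ a in l, lo a ≤ f a ∧ f a ≤ hi a) :
    Tendsto f l (𝓝 c) := by
  refine tendsto_order.2 ⟨fun b hb ↦ ?_, fun b hb ↦ ?_⟩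
  · obtain ⟨i, hbL, _, _, hlo, -, hsq⟩ := ((hL.eventually_const_lt hb).and h).exists
    filter_upwards [hlo.eventually_const_lt hbL, hsq] with a h₁ h₂ using h₁.trans_le h₂.1
  · obtain ⟨i, hUb, _, _, -, hhi, hsq⟩ := ((hU.eventually_lt_const hb).and h).exists
    filter_upwards [hhi.eventually_lt_const hUb, hsq] with a h₁ h₂ using h₂.2.trans_lt h₁

theorem Real.tendsto_sub_one_div_one_sub_rpow {p : ℝ} (hp : p ≠ 0) :
    Tendsto (fun x : ℝ ↦ (x - 1) / (1 - x ^ p)) (𝓝[≠] 1) (𝓝 (-p⁻¹)) := by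
  have hd : HasDerivAt (fun x : ℝ ↦ x ^ p) p 1 := by
    simpa using Real.hasDerivAt_rpow_const (x := 1) (p := p) (Or.inl one_ne_zero)
  refine ((hasDerivAt_iff_tendsto_slope.1 hd).inv₀ hp).neg.congr fun x ↦ ?_
  rw [slope_def_field, Real.one_rpow, inv_div, ← div_neg, neg_sub]

/-- Block `k` collects the `i` with `u * x ^ k ≤ u + i < u * x ^ (k + 1)`. -/
noncomputable def blockSum (F : ℝ → ℝ) (x u : ℝ) (k : ℕ) : ℝ :=
  ∑ i ∈ Ico ⌈u * (x ^ k - 1)⌉₊ ⌈u * (x ^ (k + 1) - 1)⌉₊, F (u + i)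

section RegularVariation

variable {F : ℝ → ℝ} {ρ x u q : ℝ}

theorem blockSum_bounds (hFpos : ∀ t ≥ 0, 0 < F t) (hFanti : AntitoneOn F (Set.Ici 0))
    (hx : 1 ≤ x) (hu : 0 ≤ u) (k : ℕ) :
    (u * x ^ k * (x - 1) - 1) * F (u * x ^ (k + 1)) ≤ blockSum F x u k ∧
      blockSum F x u k ≤ (u * x ^ k * (x - 1) + 1) * F (u * x ^ k) := by
  have hφ : AntitoneOn (fun t ↦ F (u + t)) (Set.Ici 0) := fun s hs t ht hst ↦
    hFanti (add_nonneg hu hs) (add_nonneg hu ht) (add_le_add_right hst u)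
  have hφ0 : ∀ t ≥ 0, 0 ≤ F (u + t) := fun t ht ↦ (hFpos _ (add_nonneg hu ht)).le
  have ha : 0 ≤ u * (x ^ k - 1) := mul_nonneg hu (sub_nonneg.2 (one_le_pow₀ hx))
  have hab : u * (x ^ k - 1) ≤ u * (x ^ (k + 1) - 1) :=
    mul_le_mul_of_nonneg_left (sub_le_sub_right (pow_le_pow_right₀ hx k.le_succ) 1) hu
  have hlen : u * (x ^ (k + 1) - 1) - u * (x ^ k - 1) = u * x ^ k * (x - 1) := by ring
  have hstart : u + u * (x ^ k - 1) = u * x ^ k := by ring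
  have hend : u + u * (x ^ (k + 1) - 1) = u * x ^ (k + 1) := by ring
  have hlow := le_sum_Ico_ceil_of_antitoneOn hφ hφ0 ha hab
  have hup := sum_Ico_ceil_le_of_antitoneOn hφ hφ0 ha hab
  rw [hlen, hend] at hlow
  rw [hlen, hstart] at hup
  exact ⟨hlow, hup⟩

theorem hasSum_blockSum (hFpos : ∀ t ≥ 0, 0 < F t) (hx : 1 < x) (hu : 0 < u)
    (hs : Summable (blockSum F x u)) :
    HasSum (fun i : ℕ ↦ F (u + i)) (∑' k, blockSum F x u k) := by
  have hn : Tendsto (fun k : ℕ ↦ u * (x ^ k - 1)) atTop atTop := by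
    simpa only [sub_eq_add_neg] using (tendsto_atTop_add_const_right _ (-1)
      (tendsto_pow_atTop_atTop_of_one_lt hx)).const_mul_atTop hu
  exact hasSum_of_hasSum_Ico_blocks (fun i ↦ (hFpos _ (by positivity)).le)
    (fun k l hkl ↦ Nat.ceil_mono (mul_le_mul_of_nonneg_left
      (sub_le_sub_right (pow_le_pow_right₀ hx.le hkl) 1) hu.le))
    (by simp) (tendsto_nat_ceil_atTop.comp hn) hs.hasSum

theorem tail_ratio_eq_tsum_blockSum_div (hFpos : ∀ t ≥ 0, 0 < F t) (hx : 1 < x) (hu : 0 < u)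
    (hs : Summable fun k ↦ blockSum F x u k / (u * F u)) :
    u⁻¹ * ∑' i : ℕ, F (u + i) / F u = ∑' k, blockSum F x u k / (u * F u) := by
  have hFu := hFpos u hu.le
  have hB := hasSum_blockSum hFpos hx hu ((summable_div_const_iff (by positivity)).1 hs)
  rw [tsum_div_const, tsum_div_const, hB.tsum_eq]
  field_simp

theorem eventually_le_pow_mul_of_eventually_le (hx : 1 ≤ x) (hq : 0 ≤ q)
    (h : ∀ᶠ v in atTop, F (v * x) ≤ q * F v) :
    ∀ᶠ u in atTop, ∀ k : ℕ, F (u * x ^ k) ≤ q ^ k * F u := by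
  obtain ⟨U, hU⟩ := eventually_atTop.1 h
  filter_upwards [eventually_ge_atTop (max U 0)] with u hu k
  have hu0 : 0 ≤ u := (le_max_right U 0).trans hu
  induction k with
  | zero => simp
  | succ k ih =>
    calc F (u * x ^ (k + 1)) = F (u * x ^ k * x) := by rw [pow_succ, mul_assoc]
      _ ≤ q * F (u * x ^ k) := hU _ ((le_max_left U 0).trans
          (hu.trans (le_mul_of_one_le_right hu0 (one_le_pow₀ hx))))
      _ ≤ q * (q ^ k * F u) := mul_le_mul_of_nonneg_left ih hq
      _ = q ^ (k + 1) * F u := by ring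

theorem exists_eventually_le_pow_mul (hρ : ρ < -1) (hFpos : ∀ t ≥ 0, 0 < F t) (hx : 1 < x)
    (hRVx : Tendsto (fun u ↦ F (u * x) / F u) atTop (𝓝 (x ^ ρ))) :
    ∃ q, 0 ≤ q ∧ x * q < 1 ∧ ∀ᶠ u in atTop, ∀ k : ℕ, F (u * x ^ k) ≤ q ^ k * F u := by
  have hx0 : 0 < x := one_pos.trans hx
  have hρx : x ^ ρ < x⁻¹ := by
    simpa [Real.rpow_neg_one] using Real.rpow_lt_rpow_of_exponent_lt hx hρ
  obtain ⟨q, hρq, hqx⟩ := exists_between hρx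
  have hq : 0 ≤ q := (Real.rpow_pos_of_pos hx0 ρ).le.trans hρq.le
  refine ⟨q, hq, by simpa [hx0.ne'] using mul_lt_mul_of_pos_left hqx hx0,
    eventually_le_pow_mul_of_eventually_le hx.le hq ?_⟩
  filter_upwards [hRVx.eventually_lt_const hρq, eventually_ge_atTop 0] with v hv hv0
  exact ((div_lt_iff₀ (hFpos v hv0)).1 hv).le

theorem eventually_abs_coeff_le (hx : 1 ≤ x) :
    ∀ᶠ u : ℝ in atTop, ∀ k : ℕ,
      |x ^ k * (x - 1) + u⁻¹| ≤ x ^ (k + 1) ∧ |x ^ k * (x - 1) - u⁻¹| ≤ x ^ (k + 1) := by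
  filter_upwards [eventually_ge_atTop 1] with u hu k
  have hinv : u⁻¹ ≤ x ^ k := (inv_le_one_of_one_le₀ hu).trans (one_le_pow₀ hx)
  have hinv0 : 0 ≤ u⁻¹ := by positivity
  have hmain : 0 ≤ x ^ k * (x - 1) := mul_nonneg (by positivity) (sub_nonneg.2 hx)
  have hsplit : x ^ (k + 1) = x ^ k * (x - 1) + x ^ k := by ring
  constructor <;> rw [abs_le] <;> constructor <;> linarith

theorem eventually_norm_coeff_mul_ratio_le (hFpos : ∀ t ≥ 0, 0 < F t) (hx : 1 < x)
    (hq : 0 ≤ q) (hxq : x * q < 1)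
    (hdom : ∀ᶠ u in atTop, ∀ k : ℕ, F (u * x ^ k) ≤ q ^ k * F u) :
    ∀ᶠ u in atTop, ∀ (j : ℕ) (c : ℕ → ℝ), (∀ k, |c k| ≤ x ^ (k + 1)) →
      ∀ k, ‖c k * (F (u * x ^ (k + j)) / F u)‖ ≤ x * (x * q) ^ k := by
  have hq1 : q ≤ 1 := by nlinarith
  filter_upwards [eventually_ge_atTop 0, hdom] with u hu hdu j c hc k
  have hFu := hFpos u hu
  have hratio : ‖F (u * x ^ (k + j)) / F u‖ ≤ q ^ k := by
    rw [Real.norm_of_nonneg (div_nonneg (hFpos _ (by positivity)).le hFu.le),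
      div_le_iff₀ hFu]
    exact (hdu (k + j)).trans (mul_le_mul_of_nonneg_right
      (pow_le_pow_of_le_one hq hq1 (k.le_add_right j)) hFu.le)
  calc ‖c k * (F (u * x ^ (k + j)) / F u)‖ ≤ x ^ (k + 1) * q ^ k := by
        rw [norm_mul]; exact mul_le_mul (hc k) hratio (norm_nonneg _) (by positivity)
    _ = x * (x * q) ^ k := by ring

theorem eventually_tsum_le_tail_ratio_le (hFpos : ∀ t ≥ 0, 0 < F t)
    (hFanti : AntitoneOn F (Set.Ici 0)) (hx : 1 < x) (hq : 0 ≤ q) (hxq : x * q < 1)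
    (hdom : ∀ᶠ u in atTop, ∀ k : ℕ, F (u * x ^ k) ≤ q ^ k * F u) :
    ∀ᶠ u in atTop,
      ∑' k : ℕ, (x ^ k * (x - 1) - u⁻¹) * (F (u * x ^ (k + 1)) / F u) ≤
          u⁻¹ * ∑' i : ℕ, F (u + i) / F u ∧
        u⁻¹ * ∑' i : ℕ, F (u + i) / F u ≤
          ∑' k : ℕ, (x ^ k * (x - 1) + u⁻¹) * (F (u * x ^ k) / F u) := by
  have hgeom : Summable fun k : ℕ ↦ x * (x * q) ^ k :=
    (summable_geometric_of_lt_one (by positivity) hxq).mul_left x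
  filter_upwards [eventually_gt_atTop 0, eventually_abs_coeff_le hx.le,
    eventually_norm_coeff_mul_ratio_le hFpos hx hq hxq hdom] with u hu hcoeff hnorm
  have hFu := hFpos u hu.le
  have hsumU := hgeom.of_norm_bounded (hnorm 0 _ fun k ↦ (hcoeff k).1)
  have hsumL := hgeom.of_norm_bounded (hnorm 1 _ fun k ↦ (hcoeff k).2)
  have hdiv (k : ℕ) :
      (x ^ k * (x - 1) - u⁻¹) * (F (u * x ^ (k + 1)) / F u) ≤ blockSum F x u k / (u * F u) ∧
        blockSum F x u k / (u * F u) ≤ (x ^ k * (x - 1) + u⁻¹) * (F (u * x ^ k) / F u) := by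
    have hlow : (x ^ k * (x - 1) - u⁻¹) * (F (u * x ^ (k + 1)) / F u) * (u * F u) =
        (u * x ^ k * (x - 1) - 1) * F (u * x ^ (k + 1)) := by field_simp
    have hup : (x ^ k * (x - 1) + u⁻¹) * (F (u * x ^ k) / F u) * (u * F u) =
        (u * x ^ k * (x - 1) + 1) * F (u * x ^ k) := by field_simp
    rw [le_div_iff₀ (by positivity), div_le_iff₀ (by positivity), hlow, hup]
    exact blockSum_bounds hFpos hFanti hx.le hu.le k
  have hsumB : Summable fun k ↦ blockSum F x u k / (u * F u) :=
    hsumU.of_nonneg_of_le (fun k ↦ div_nonneg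
      (sum_nonneg fun i _ ↦ (hFpos _ (by positivity)).le) (by positivity)) fun k ↦ (hdiv k).2
  rw [tail_ratio_eq_tsum_blockSum_div hFpos hx hu hsumB]
  exact ⟨hsumL.tsum_le_tsum (fun k ↦ (hdiv k).1) hsumB,
    hsumB.tsum_le_tsum (fun k ↦ (hdiv k).2) hsumU⟩

theorem tendsto_ratio_pow
    (hRV : ∀ y ≥ (1 : ℝ), Tendsto (fun u ↦ F (u * y) / F u) atTop (𝓝 (y ^ ρ)))
    (hx : 1 ≤ x) (k : ℕ) :
    Tendsto (fun u ↦ F (u * x ^ k) / F u) atTop (𝓝 ((x ^ ρ) ^ k)) := by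
  have hx0 : 0 ≤ x := zero_le_one.trans hx
  have h := hRV (x ^ k) (one_le_pow₀ hx)
  rwa [← Real.rpow_natCast_mul hx0, mul_comm (k : ℝ) ρ, Real.rpow_mul_natCast hx0] at h

theorem tendsto_tsum_coeff_mul_ratio (hρ : ρ < -1) (hFpos : ∀ t ≥ 0, 0 < F t)
    (hRV : ∀ y ≥ (1 : ℝ), Tendsto (fun u ↦ F (u * y) / F u) atTop (𝓝 (y ^ ρ)))
    (hx : 1 < x) (hq : 0 ≤ q) (hxq : x * q < 1)
    (hdom : ∀ᶠ u in atTop, ∀ k : ℕ, F (u * x ^ k) ≤ q ^ k * F u) (j : ℕ) {c : ℝ → ℕ → ℝ}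
    (hc : ∀ k, Tendsto (c · k) atTop (𝓝 (x ^ k * (x - 1))))
    (hcb : ∀ᶠ u in atTop, ∀ k, |c u k| ≤ x ^ (k + 1)) :
    Tendsto (fun u ↦ ∑' k, c u k * (F (u * x ^ (k + j)) / F u)) atTop
      (𝓝 ((x ^ ρ) ^ j * ((x - 1) / (1 - x ^ (ρ + 1))))) := by
  have hx0 : 0 < x := one_pos.trans hx
  have hxρ : x * x ^ ρ = x ^ (ρ + 1) := by rw [Real.rpow_add_one hx0.ne', mul_comm]
  have hr : x ^ (ρ + 1) < 1 := Real.rpow_lt_one_of_one_lt_of_neg hx (by linarith)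
  have hlim : ∑' k : ℕ, x ^ k * (x - 1) * (x ^ ρ) ^ (k + j) =
      (x ^ ρ) ^ j * ((x - 1) / (1 - x ^ (ρ + 1))) :=
    calc ∑' k : ℕ, x ^ k * (x - 1) * (x ^ ρ) ^ (k + j)
        = ∑' k : ℕ, (x ^ ρ) ^ j * (x - 1) * (x ^ (ρ + 1)) ^ k := by
          congr 1; funext k; rw [← hxρ]; ring
      _ = (x ^ ρ) ^ j * ((x - 1) / (1 - x ^ (ρ + 1))) := by
          rw [tsum_mul_left, tsum_geometric_of_lt_one (by positivity) hr]; ring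
  rw [← hlim]
  refine tendsto_tsum_of_dominated_convergence
    ((summable_geometric_of_lt_one (by positivity) hxq).mul_left x)
    (fun k ↦ (hc k).mul (tendsto_ratio_pow hRV hx.le (k + j))) ?_
  filter_upwards [hcb, eventually_norm_coeff_mul_ratio_le hFpos hx hq hxq hdom]
    with u hcu hu using hu j (c u) hcu

theorem exists_tail_ratio_squeeze (hρ : ρ < -1) (hFpos : ∀ t ≥ 0, 0 < F t)
    (hFanti : AntitoneOn F (Set.Ici 0))
    (hRV : ∀ y ≥ (1 : ℝ), Tendsto (fun u ↦ F (u * y) / F u) atTop (𝓝 (y ^ ρ))) (hx : 1 < x) :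
    ∃ lo hi : ℝ → ℝ, Tendsto lo atTop (𝓝 (x ^ ρ * ((x - 1) / (1 - x ^ (ρ + 1))))) ∧
      Tendsto hi atTop (𝓝 ((x - 1) / (1 - x ^ (ρ + 1)))) ∧
      ∀ᶠ u in atTop, lo u ≤ u⁻¹ * ∑' i : ℕ, F (u + i) / F u ∧
        u⁻¹ * ∑' i : ℕ, F (u + i) / F u ≤ hi u := by
  obtain ⟨q, hq, hxq, hdom⟩ := exists_eventually_le_pow_mul hρ hFpos hx (hRV x hx.le)
  have hcoeff := eventually_abs_coeff_le hx.le
  refine ⟨_, _, ?_, ?_, eventually_tsum_le_tail_ratio_le hFpos hFanti hx hq hxq hdom⟩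
  · simpa using tendsto_tsum_coeff_mul_ratio hρ hFpos hRV hx hq hxq hdom 1
      (c := fun u k ↦ x ^ k * (x - 1) - u⁻¹)
      (fun k ↦ by simpa using tendsto_inv_atTop_zero.const_sub (x ^ k * (x - 1)))
      (hcoeff.mono fun u h k ↦ (h k).2)
  · simpa using tendsto_tsum_coeff_mul_ratio hρ hFpos hRV hx hq hxq hdom 0
      (c := fun u k ↦ x ^ k * (x - 1) + u⁻¹)
      (fun k ↦ by simpa using tendsto_inv_atTop_zero.const_add (x ^ k * (x - 1)))
      (hcoeff.mono fun u h k ↦ (h k).1)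

end RegularVariation

/-- If `F̄` is positive, nonincreasing on `[0,∞)` and regularly varying
with index `-1/ξ - 1` (`ξ > 0`), then `u⁻¹ ∑_{i=0}^∞ F̄(u+i)/F̄(u) → ξ` as `u → ∞`. -/
theorem rv_tail_sum_ratio_tendsto (ξ : ℝ) (hξ : 0 < ξ) (F : ℝ → ℝ)
    (hFpos : ∀ x ≥ (0:ℝ), 0 < F x)
    (hFanti : AntitoneOn F (Set.Ici 0))
    (hRV : ∀ x ≥ (1:ℝ), Filter.Tendsto (fun u : ℝ => F (u * x) / F u)
      Filter.atTop (nhds (x ^ (-1/ξ - 1)))) :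
    Filter.Tendsto (fun u : ℝ => u⁻¹ * ∑' i : ℕ, F (u + i) / F u)
      Filter.atTop (nhds ξ) := by
  have hξ' : -1 / ξ < 0 := div_neg_of_neg_of_pos neg_one_lt_zero hξ
  have hU : Tendsto (fun x : ℝ ↦ (x - 1) / (1 - x ^ (-1 / ξ))) (𝓝[>] 1) (𝓝 ξ) := by
    simpa [hξ.ne', div_neg] using (Real.tendsto_sub_one_div_one_sub_rpow hξ'.ne).mono_left
      (nhdsWithin_mono 1 fun x (hx : x ∈ Set.Ioi 1) ↦ hx.ne')
  have hL : Tendsto (fun x : ℝ ↦ x ^ (-1 / ξ - 1) * ((x - 1) / (1 - x ^ (-1 / ξ))))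
      (𝓝[>] 1) (𝓝 ξ) := by
    simpa using (((continuousAt_id.rpow_const (Or.inl one_ne_zero)).tendsto).mono_left
      nhdsWithin_le_nhds).mul hU
  refine tendsto_of_forall_eventually_squeeze hL hU ?_
  filter_upwards [self_mem_nhdsWithin] with x hx
  simpa using exists_tail_ratio_squeeze (by linarith) hFpos hFanti hRV hx
end

section
/- In the case ξ = 0: for every k ∈ ℕ and every σ > 0, p_DGPD(k; σ, 0)/f_GPD(k; σ, 0) = p_GZD(k; σ, 0)/f_GPD(k; σ, 0) = σ(1 − e^{−1/σ}), and σ(1 − e^{−1/σ}) → 1 as σ → ∞; consequently sup_{k ∈ ℕ} | p_DGPD(k; σ, 0)/f_GPD(k; σ, 0) − 1 | → 0 and sup_{k ∈ ℕ} | p_DGPD(k; σ, 0)/p_GZD(k; σ, 0) − 1 | → 0 as σ → ∞. -/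
/-- GPD density with `ξ = 0`: `f_GPD(x; σ, 0) = σ⁻¹ e^(-x/σ)`. -/
noncomputable def fGPD0 (σ x : ℝ) : ℝ := σ⁻¹ * Real.exp (-x / σ)

/-- D-GPD probability mass function with `ξ = 0`:
`p_DGPD(k; σ, 0) = e^(-k/σ) - e^(-(k+1)/σ)`. -/
noncomputable def pDGPD0 (σ : ℝ) (k : ℕ) : ℝ :=
  Real.exp (-(k : ℝ) / σ) - Real.exp (-((k : ℝ) + 1) / σ)

/-- Generalized Zipf probability mass function with `ξ = 0` (geometric):
`p_GZD(k; σ, 0) = (1 - e^(-1/σ)) e^(-k/σ)`. -/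
noncomputable def pGZD0 (σ : ℝ) (k : ℕ) : ℝ :=
  (1 - Real.exp (-1 / σ)) * Real.exp (-(k : ℝ) / σ)

/-!
For `ξ = 0` the discretised exponential is exactly the geometric law, and both mass functions are
`e^(-k/σ)` times `1 - e^(-1/σ)`, while the density is `e^(-k/σ)` times `σ⁻¹`. All ratios are
therefore independent of `k`, and `σ (1 - e^(-1/σ))` is a difference quotient of `t ↦ e^(-t)` at
`0` with step `1/σ`, so it tends to `-(d/dt) e^(-t) |_(t=0) = 1`.
-/

open Real Filter Topology

theorem pDGPD0_eq_pGZD0 (σ : ℝ) (k : ℕ) : pDGPD0 σ k = pGZD0 σ k := by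
  rw [pDGPD0, pGZD0, show -((k : ℝ) + 1) / σ = -1 / σ + -(k : ℝ) / σ by ring, exp_add]
  ring

theorem pGZD0_div_fGPD0 {σ : ℝ} (hσ : σ ≠ 0) (k : ℕ) :
    pGZD0 σ k / fGPD0 σ k = σ * (1 - exp (-1 / σ)) := by
  have := exp_ne_zero (-(k : ℝ) / σ)
  rw [pGZD0, fGPD0]
  field_simp

theorem pGZD0_ne_zero {σ : ℝ} (hσ : σ ≠ 0) (k : ℕ) : pGZD0 σ k ≠ 0 := by
  have hexp : exp (-1 / σ) ≠ 1 := by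
    rw [Ne, exp_eq_one_iff, div_eq_zero_iff]
    norm_num [hσ]
  exact mul_ne_zero (sub_ne_zero.mpr hexp.symm) (exp_ne_zero _)

theorem tendsto_mul_one_sub_exp_neg_inv_atTop :
    Tendsto (fun σ : ℝ => σ * (1 - exp (-1 / σ))) atTop (𝓝 1) := by
  have hderiv : HasDerivAt (fun t : ℝ => exp (-t)) (-1) 0 := by
    simpa using (hasDerivAt_neg (0 : ℝ)).exp
  have := (hderiv.tendsto_slope_zero_right.comp tendsto_inv_atTop_nhdsGT_zero).neg
  refine (neg_neg (1 : ℝ) ▸ this).congr fun σ => ?_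
  simp only [Function.comp_apply, smul_eq_mul, inv_inv, zero_add, neg_zero, exp_zero]
  rw [neg_div, one_div]
  ring

/-- In the case `ξ = 0`: for every `k ∈ ℕ` and `σ > 0`,
`p_DGPD(k;σ,0)/f_GPD(k;σ,0) = p_GZD(k;σ,0)/f_GPD(k;σ,0) = σ(1 - e^(-1/σ))`, which tends
to `1` as `σ → ∞`; consequently `sup_{k} |p_DGPD(k;σ,0)/f_GPD(k;σ,0) - 1| → 0` and
`sup_{k} |p_DGPD(k;σ,0)/p_GZD(k;σ,0) - 1| → 0` as `σ → ∞`. -/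
theorem xi_zero_ratios_tendsto_one :
    (∀ σ > (0:ℝ), ∀ k : ℕ,
      pDGPD0 σ k / fGPD0 σ k = σ * (1 - Real.exp (-1 / σ)) ∧
      pGZD0 σ k / fGPD0 σ k = σ * (1 - Real.exp (-1 / σ))) ∧
    Filter.Tendsto (fun σ : ℝ => σ * (1 - Real.exp (-1 / σ))) Filter.atTop (nhds 1) ∧
    (∀ ε > (0:ℝ), ∃ S : ℝ, ∀ σ ≥ S, ∀ k : ℕ,
      |pDGPD0 σ k / fGPD0 σ k - 1| ≤ ε) ∧
    (∀ ε > (0:ℝ), ∃ S : ℝ, ∀ σ ≥ S, ∀ k : ℕ,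
      |pDGPD0 σ k / pGZD0 σ k - 1| ≤ ε) := by
  refine ⟨fun σ hσ k => ?_, tendsto_mul_one_sub_exp_neg_inv_atTop, fun ε hε => ?_,
    fun ε hε => ⟨1, fun σ hσ k => ?_⟩⟩
  · rw [pDGPD0_eq_pGZD0]
    exact ⟨pGZD0_div_fGPD0 hσ.ne' k, pGZD0_div_fGPD0 hσ.ne' k⟩
  · obtain ⟨S, hS⟩ := eventually_atTop.mp <|
      (tendsto_mul_one_sub_exp_neg_inv_atTop.eventually (Metric.closedBall_mem_nhds 1 hε)).and
        (eventually_gt_atTop 0)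
    refine ⟨S, fun σ hσ k => ?_⟩
    obtain ⟨hclose, hpos⟩ := hS σ hσ
    rw [pDGPD0_eq_pGZD0, pGZD0_div_fGPD0 hpos.ne' k]
    exact hclose
  · rw [pDGPD0_eq_pGZD0, div_self (pGZD0_ne_zero (by linarith) k), sub_self, abs_zero]
    exact hε.le
end

section
/- Let F̄(x) = c(x)·exp(−∫_0^x 1/a(y) dy) for x ≥ 0, where c : [0,∞) → (0,∞) is measurable with c(x) → c₀ > 0 as x → ∞, and a : [0,∞) → (0,∞) is measurable with 1/a locally integrable and a(x) → σ as x → ∞, where 0 < σ < ∞. Let p : ℕ → (0,∞) satisfy p(k) = F̄(k) for all k ∈ ℕ. Then for every k ∈ ℕ, p(k + u) / ∑_{i=0}^{∞} p(i + u) → (1 − e^{−1/σ}) e^{−k/σ} as u → ∞ along the positive integers; that is, the normalized exceedance probabilities converge to the geometric probability mass function with parameter 1 − e^{−1/σ}. -/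
open MeasureTheory Filter Topology

/-!
The consecutive ratios `p (n + 1) / p n = c (n + 1) / c n * exp (-∫ₙⁿ⁺¹ 1/a)` tend to
`ρ = e^{-1/σ} < 1`. For any eventually positive sequence with this property,
`p (i + u) / p u → ρ ^ i`, and choosing `ρ < r < 1` the ratio bound gives the uniform
domination `p (i + u) / p u ≤ r ^ i` for large `u`. Dominated convergence then yields
`∑ᵢ p (i + u) / p u → (1 - ρ)⁻¹`, and dividing the two limits gives the geometric law.
-/

section RatioLimit

variable {p : ℕ → ℝ} {ρ : ℝ}

theorem tendsto_div_shift_of_tendsto_ratio (hp : ∀ᶠ n in atTop, p n ≠ 0)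
    (hρ : Tendsto (fun n => p (n + 1) / p n) atTop (𝓝 ρ)) (j : ℕ) :
    Tendsto (fun u => p (j + u) / p u) atTop (𝓝 (ρ ^ j)) := by
  induction j with
  | zero =>
    refine tendsto_const_nhds.congr' ?_
    filter_upwards [hp] with u hu
    simp [hu]
  | succ j ih =>
    rw [pow_succ']
    refine ((hρ.comp (tendsto_add_atTop_nat j)).mul ih).congr' ?_
    filter_upwards [hp, (tendsto_add_atTop_nat j).eventually hp] with u hu hju
    simp only [Function.comp_apply]
    rw [add_comm u j] at hju ⊢
    rw [div_mul_div_cancel₀ hju, add_right_comm]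

theorem eventually_forall_norm_div_shift_le_pow (hp : ∀ᶠ n in atTop, 0 < p n)
    (hρ : Tendsto (fun n => p (n + 1) / p n) atTop (𝓝 ρ)) {r : ℝ} (hr : ρ < r) :
    ∀ᶠ u in atTop, ∀ i, ‖p (i + u) / p u‖ ≤ r ^ i := by
  obtain ⟨N, hN⟩ := eventually_atTop.1 (hp.and (hρ.eventually_lt_const hr))
  have hr0 : 0 < r := (div_pos (hN (N + 1) (by omega)).1 (hN N le_rfl).1).trans (hN N le_rfl).2
  filter_upwards [eventually_ge_atTop N] with u hu i
  have hpu := (hN u hu).1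
  rw [norm_div, Real.norm_of_nonneg (hN _ (by omega)).1.le, Real.norm_of_nonneg hpu.le,
    div_le_iff₀ hpu]
  induction i with
  | zero => simp
  | succ i ih =>
    obtain ⟨hpos, hlt⟩ := hN (i + u) (by omega)
    rw [div_lt_iff₀ hpos] at hlt
    calc p (i + 1 + u) = p (i + u + 1) := by rw [add_right_comm]
      _ ≤ r * p (i + u) := hlt.le
      _ ≤ r * (r ^ i * p u) := mul_le_mul_of_nonneg_left ih hr0.le
      _ = r ^ (i + 1) * p u := by ring

theorem tendsto_div_tsum_shift_of_tendsto_ratio (hp : ∀ᶠ n in atTop, 0 < p n)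
    (hρ : Tendsto (fun n => p (n + 1) / p n) atTop (𝓝 ρ)) (hρ1 : ρ < 1) (k : ℕ) :
    Tendsto (fun u => p (k + u) / ∑' i, p (i + u)) atTop (𝓝 ((1 - ρ) * ρ ^ k)) := by
  have hne : ∀ᶠ n in atTop, p n ≠ 0 := hp.mono fun n hn => hn.ne'
  have hρ0 : 0 ≤ ρ := ge_of_tendsto hρ <|
    (hp.and ((tendsto_add_atTop_nat 1).eventually hp)).mono fun n hn => (div_pos hn.2 hn.1).le
  obtain ⟨r, hρr, hr1⟩ := exists_between hρ1
  have hsum : Tendsto (fun u => ∑' i, p (i + u) / p u) atTop (𝓝 (1 - ρ)⁻¹) := by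
    rw [← tsum_geometric_of_lt_one hρ0 hρ1]
    exact tendsto_tsum_of_dominated_convergence
      (summable_geometric_of_lt_one (hρ0.trans hρr.le) hr1)
      (tendsto_div_shift_of_tendsto_ratio hne hρ)
      (eventually_forall_norm_div_shift_le_pow hp hρ hρr)
  have hlim := (tendsto_div_shift_of_tendsto_ratio hne hρ k).div hsum
    (inv_ne_zero (sub_ne_zero.2 hρ1.ne'))
  rw [div_inv_eq_mul, mul_comm] at hlim
  refine hlim.congr' ?_
  filter_upwards [hne] with u hu
  simp only [Pi.div_apply]
  rw [tsum_div_const, div_div_div_cancel_right₀ hu]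

end RatioLimit

theorem tendsto_intervalIntegral_add_one {E : Type*} [NormedAddCommGroup E] [NormedSpace ℝ E]
    [CompleteSpace E] {f : ℝ → E} {L : E} (hf : Tendsto f atTop (𝓝 L))
    (hfi : ∀ᶠ x in atTop, IntervalIntegrable f volume x (x + 1)) :
    Tendsto (fun x => ∫ y in x..x + 1, f y) atTop (𝓝 L) := by
  rw [Metric.tendsto_nhds]
  intro ε hε
  obtain ⟨Y, hY⟩ := eventually_atTop.1 (Metric.tendsto_nhds.1 hf (ε / 2) (half_pos hε))
  filter_upwards [hfi, eventually_ge_atTop Y] with x hx hxY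
  have hsub : ∫ y in x..x + 1, (f y - L) = (∫ y in x..x + 1, f y) - L := by
    rw [intervalIntegral.integral_sub hx intervalIntegrable_const,
      intervalIntegral.integral_const, add_sub_cancel_left, one_smul]
  rw [dist_eq_norm, ← hsub]
  calc ‖∫ y in x..x + 1, (f y - L)‖ ≤ ε / 2 * |x + 1 - x| :=
        intervalIntegral.norm_integral_le_of_norm_le_const fun y hy => ?_
    _ < ε := by rw [add_sub_cancel_left, abs_one, mul_one]; linarith
  rw [Set.uIoc_of_le (by linarith)] at hy
  rw [← dist_eq_norm]
  exact (hY y (hxY.trans hy.1.le)).le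

theorem div_eq_div_mul_exp_neg_intervalIntegral {c g F : ℝ → ℝ}
    (hF : ∀ x ≥ (0:ℝ), F x = c x * Real.exp (-∫ y in (0:ℝ)..x, g y)) {x y : ℝ}
    (hx : 0 ≤ x) (hy : 0 ≤ y) (h0x : IntervalIntegrable g volume 0 x)
    (hxy : IntervalIntegrable g volume x y) :
    F y / F x = c y / c x * Real.exp (-∫ t in x..y, g t) := by
  rw [hF x hx, hF y hy, mul_div_mul_comm, ← Real.exp_sub,
    ← intervalIntegral.integral_add_adjacent_intervals h0x hxy]
  ring_nf

theorem tendsto_succ_div_of_representation {c a F : ℝ → ℝ} {c₀ σ : ℝ} (hc₀ : c₀ ≠ 0)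
    (hσ : σ ≠ 0) (hclim : Tendsto c atTop (𝓝 c₀))
    (haint : ∀ x ≥ (0:ℝ), IntegrableOn (fun y => (a y)⁻¹) (Set.Icc 0 x))
    (halim : Tendsto a atTop (𝓝 σ))
    (hF : ∀ x ≥ (0:ℝ), F x = c x * Real.exp (-∫ y in (0:ℝ)..x, (a y)⁻¹)) :
    Tendsto (fun n : ℕ => F (n + 1) / F n) atTop (𝓝 (Real.exp (-σ⁻¹))) := by
  have hII : ∀ {x y : ℝ}, 0 ≤ x → x ≤ y →
      IntervalIntegrable (fun t => (a t)⁻¹) volume x y := fun hx hxy =>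
    (intervalIntegrable_iff_integrableOn_Icc_of_le hxy).2
      ((haint _ (hx.trans hxy)).mono_set (Set.Icc_subset_Icc hx le_rfl))
  have hc : Tendsto (fun x => c (x + 1) / c x) atTop (𝓝 (c₀ / c₀)) :=
    (hclim.comp (tendsto_atTop_add_const_right _ 1 tendsto_id)).div hclim hc₀
  rw [div_self hc₀] at hc
  have hI := tendsto_intervalIntegral_add_one (halim.inv₀ hσ)
    ((eventually_ge_atTop 0).mono fun x hx => hII hx (by linarith))
  have hratio := (hc.mul (Real.continuous_exp.tendsto _ |>.comp hI.neg)).comp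
    tendsto_natCast_atTop_atTop
  rw [one_mul] at hratio
  refine hratio.congr fun n => ?_
  rw [div_eq_div_mul_exp_neg_intervalIntegral (g := fun t => (a t)⁻¹) hF n.cast_nonneg
    (by positivity) (hII le_rfl n.cast_nonneg) (hII n.cast_nonneg (by linarith))]
  rfl

theorem gumbel_exceedances_tendsto_geometric_general
    (c a : ℝ → ℝ) (c₀ σ : ℝ) (hc₀ : 0 < c₀) (hσ : 0 < σ)
    (hclim : Tendsto c atTop (nhds c₀))
    (haint : ∀ x ≥ (0:ℝ), IntegrableOn (fun y => (a y)⁻¹) (Set.Icc 0 x))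
    (halim : Tendsto a atTop (nhds σ))
    (F : ℝ → ℝ)
    (hF : ∀ x ≥ (0:ℝ), F x = c x * Real.exp (-∫ y in (0:ℝ)..x, (a y)⁻¹))
    (p : ℕ → ℝ) (hp : ∀ k : ℕ, p k = F k) :
    ∀ k : ℕ, Tendsto (fun u : ℕ => p (k + u) / ∑' i : ℕ, p (i + u))
      atTop (nhds ((1 - Real.exp (-1 / σ)) * Real.exp (-(k : ℝ) / σ))) := by
  intro k
  have hpos : ∀ᶠ n in atTop, 0 < p n := by
    filter_upwards [tendsto_natCast_atTop_atTop.eventually (hclim.eventually_const_lt hc₀)]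
      with n hn
    rw [hp, hF _ n.cast_nonneg]
    exact mul_pos hn (Real.exp_pos _)
  have hratio : Tendsto (fun n => p (n + 1) / p n) atTop (𝓝 (Real.exp (-1 / σ))) := by
    simpa only [hp, Nat.cast_succ, neg_div, one_div] using
      tendsto_succ_div_of_representation hc₀.ne' hσ.ne' hclim haint halim hF
  have hρ1 : Real.exp (-1 / σ) < 1 :=
    Real.exp_lt_one_iff.2 (div_neg_of_neg_of_pos (by norm_num) hσ)
  convert tendsto_div_tsum_shift_of_tendsto_ratio hpos hratio hρ1 k using 3
  rw [← Real.exp_nat_mul]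
  ring_nf

/-- Let `F̄(x) = c(x)·exp(-∫₀ˣ 1/a(y) dy)` with `c(x) → c₀ > 0` and
auxiliary function `a(x) → σ ∈ (0,∞)`, and let `p(k) = F̄(k)` on `ℕ`. Then for every
`k ∈ ℕ`, `p(k+u)/∑_{i=0}^∞ p(i+u) → (1 - e^(-1/σ}) e^(-k/σ)` as `u → ∞` over the
positive integers: the normalized exceedance probabilities converge to the geometric
probability mass function. -/
theorem gumbel_exceedances_tendsto_geometric
    (c a : ℝ → ℝ) (c₀ σ : ℝ) (hc₀ : 0 < c₀) (hσ : 0 < σ)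
    (hcpos : ∀ x ≥ (0:ℝ), 0 < c x) (hcmeas : Measurable c)
    (hclim : Tendsto c atTop (nhds c₀))
    (hapos : ∀ x ≥ (0:ℝ), 0 < a x) (hameas : Measurable a)
    (haint : ∀ x ≥ (0:ℝ), IntegrableOn (fun y => (a y)⁻¹) (Set.Icc 0 x))
    (halim : Tendsto a atTop (nhds σ))
    (F : ℝ → ℝ)
    (hF : ∀ x ≥ (0:ℝ), F x = c x * Real.exp (-∫ y in (0:ℝ)..x, (a y)⁻¹))
    (p : ℕ → ℝ) (hp : ∀ k : ℕ, p k = F k) :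
    ∀ k : ℕ, Tendsto (fun u : ℕ => p (k + u) / ∑' i : ℕ, p (i + u))
      atTop (nhds ((1 - Real.exp (-1 / σ)) * Real.exp (-(k : ℝ) / σ))) :=
  gumbel_exceedances_tendsto_geometric_general c a c₀ σ hc₀ hσ hclim haint halim F hF p hp
end

section
/- Let F̄(x) = c(x)·exp(−∫_0^x 1/a(y) dy) for x ≥ 0, where c : [0,∞) → (0,∞) is measurable with c(x) → c₀ > 0 as x → ∞, and a : [0,∞) → (0,∞) is measurable with 1/a locally integrable and a(x) → ∞ as x → ∞. Assume ∑_{i=0}^{∞} F̄(i) < ∞. Then for every k ∈ ℕ, F̄(k + u) / ∑_{i=0}^{∞} F̄(i + u) → 0 as u → ∞ along the positive integers. -/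
open MeasureTheory Filter

/-- Let `F̄(x) = c(x)·exp(-∫₀ˣ 1/a(y) dy)` with `c(x) → c₀ > 0` and
auxiliary function `a(x) → ∞`, and assume `∑_{i=0}^∞ F̄(i) < ∞`. Then for every
`k ∈ ℕ`, `F̄(k+u)/∑_{i=0}^∞ F̄(i+u) → 0` as `u → ∞` over the positive integers. -/
theorem gumbel_exceedances_degenerate_sigma_infty
    (c a : ℝ → ℝ) (c₀ : ℝ) (hc₀ : 0 < c₀)
    (hcpos : ∀ x ≥ (0:ℝ), 0 < c x) (hcmeas : Measurable c)
    (hclim : Tendsto c atTop (nhds c₀))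
    (hapos : ∀ x ≥ (0:ℝ), 0 < a x) (hameas : Measurable a)
    (haint : ∀ x ≥ (0:ℝ), IntegrableOn (fun y => (a y)⁻¹) (Set.Icc 0 x))
    (halim : Tendsto a atTop atTop)
    (F : ℝ → ℝ)
    (hF : ∀ x ≥ (0:ℝ), F x = c x * Real.exp (-∫ y in (0:ℝ)..x, (a y)⁻¹))
    (hFsum : Summable (fun i : ℕ => F i)) :
    ∀ k : ℕ, Tendsto (fun u : ℕ => F (k + u) / ∑' i : ℕ, F (i + u))
      atTop (nhds 0) := by
  -- positivity of F
  have hFpos : ∀ x ≥ (0:ℝ), 0 < F x := by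
    intro x hx
    rw [hF x hx]
    exact mul_pos (hcpos x hx) (Real.exp_pos _)
  -- interval integrability
  have hII : ∀ x y : ℝ, 0 ≤ x → x ≤ y →
      IntervalIntegrable (fun t => (a t)⁻¹) volume x y := by
    intro x y hx hxy
    rw [intervalIntegrable_iff_integrableOn_Ioc_of_le hxy]
    exact (haint y (hx.trans hxy)).mono_set
      (fun t ht => ⟨hx.trans ht.1.le, ht.2⟩)
  -- key comparison lemma
  have hkey : ∀ x y M : ℝ, 0 ≤ x → x ≤ y → 0 < M →
      (∀ t ∈ Set.Icc x y, M ≤ a t) →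
      c y / c x * Real.exp (-((y - x) / M)) * F x ≤ F y := by
    intro x y M hx hxy hM haM
    have hy : (0:ℝ) ≤ y := hx.trans hxy
    have hcx := hcpos x hx
    have hcy := hcpos y hy
    rw [hF x hx, hF y hy]
    have hsplit : (∫ t in (0:ℝ)..y, (a t)⁻¹)
        = (∫ t in (0:ℝ)..x, (a t)⁻¹) + ∫ t in x..y, (a t)⁻¹ :=
      (intervalIntegral.integral_add_adjacent_intervals
        (hII 0 x le_rfl hx) (hII x y hx hxy)).symm
    have hJ : (∫ t in x..y, (a t)⁻¹) ≤ (y - x) / M := by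
      have hmono : (∫ t in x..y, (a t)⁻¹) ≤ ∫ _t in x..y, M⁻¹ := by
        apply intervalIntegral.integral_mono_on hxy (hII x y hx hxy)
          intervalIntegrable_const
        intro t ht
        exact inv_anti₀ hM (haM t ht)
      calc (∫ t in x..y, (a t)⁻¹) ≤ ∫ _t in x..y, M⁻¹ := hmono
        _ = (y - x) * M⁻¹ := by simp
        _ = (y - x) / M := by ring
    rw [hsplit, neg_add, Real.exp_add]
    have h1 : c y / c x * Real.exp (-((y - x) / M)) *
        (c x * Real.exp (-∫ t in (0:ℝ)..x, (a t)⁻¹))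
        = c y * (Real.exp (-∫ t in (0:ℝ)..x, (a t)⁻¹) *
            Real.exp (-((y - x) / M))) := by
      field_simp
    rw [h1]
    gcongr
    all_goals first | exact Real.exp_le_exp.2 (by linarith) | exact hcy.le
  intro k
  rw [NormedAddCommGroup.tendsto_nhds_zero]
  intro ε hε
  obtain ⟨N, hNgt⟩ := exists_nat_gt (12 / ε)
  have hNpos : 0 < (N:ℝ) := lt_of_le_of_lt (by positivity) hNgt
  have hNε : 12 / (N:ℝ) < ε := by
    rw [div_lt_iff₀ hNpos]
    rw [div_lt_iff₀ hε] at hNgt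
    linarith
  -- eventual constants
  have hc1 : ∀ᶠ x : ℝ in atTop, c x ∈ Set.Ioo (c₀ / 2) (2 * c₀) :=
    hclim (Ioo_mem_nhds (by linarith) (by linarith))
  obtain ⟨B, hB⟩ := eventually_atTop.mp hc1
  obtain ⟨Ua, hUa⟩ := eventually_atTop.mp (halim.eventually_ge_atTop (N:ℝ))
  have hev : ∀ᶠ u : ℕ in atTop, B ≤ (u:ℝ) ∧ Ua ≤ (u:ℝ) :=
    ((tendsto_natCast_atTop_atTop.eventually_ge_atTop B).and
      (tendsto_natCast_atTop_atTop.eventually_ge_atTop Ua))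
  filter_upwards [hev] with u ⟨hBu, hUau⟩
  -- lower bound on each term F (i + u) for k ≤ i < k + N
  have hlow : ∀ i : ℕ, k ≤ i → i < k + N →
      (1 / 12 : ℝ) * F (↑k + ↑u) ≤ F (↑i + ↑u) := by
    intro i hki hiN
    set x : ℝ := ↑k + ↑u with hxdef
    set y : ℝ := ↑i + ↑u with hydef
    have hx0 : (0:ℝ) ≤ x := by positivity
    have hxy : x ≤ y := by
      have : (k:ℝ) ≤ i := Nat.cast_le.2 hki
      simp only [hxdef, hydef]; linarith
    have hux : (u:ℝ) ≤ x := le_add_of_nonneg_left (Nat.cast_nonneg k)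
    have hkeyi := hkey x y (N:ℝ) hx0 hxy hNpos (by
      intro t ht
      apply hUa
      linarith [ht.1])
    have hcx := hcpos x hx0
    have hcy := hcpos y (hx0.trans hxy)
    have hcxB : c x ∈ Set.Ioo (c₀ / 2) (2 * c₀) := hB x (by linarith)
    have hcyB : c y ∈ Set.Ioo (c₀ / 2) (2 * c₀) := hB y (by linarith)
    have hq : (1 / 4 : ℝ) ≤ c y / c x := by
      rw [le_div_iff₀ hcx]
      nlinarith [hcxB.2, hcyB.1]
    have hexp : (1 / 3 : ℝ) ≤ Real.exp (-((y - x) / N)) := by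
      have hyx : (y - x) / N ≤ 1 := by
        rw [div_le_one hNpos]
        have : (i:ℝ) ≤ k + N := by exact_mod_cast hiN.le
        simp only [hxdef, hydef]; linarith
      have h3 : Real.exp (-((y - x) / N)) ≥ Real.exp (-1) :=
        Real.exp_le_exp.2 (by linarith)
      have : Real.exp (-1 : ℝ) = (Real.exp 1)⁻¹ := Real.exp_neg 1
      have he1 : Real.exp 1 < 3 := by
        have := Real.exp_one_lt_d9; linarith
      have : (1 / 3 : ℝ) ≤ (Real.exp 1)⁻¹ := by
        rw [le_inv_comm₀ (by norm_num) (Real.exp_pos 1)]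
        · linarith
      linarith [Real.exp_neg (1:ℝ) ▸ h3, this]
    have hFx : 0 < F x := hFpos x hx0
    calc (1 / 12 : ℝ) * F x ≤ (c y / c x) * Real.exp (-((y - x) / N)) * F x := by
          nlinarith [mul_le_mul hq hexp (by norm_num) (le_of_lt (div_pos hcy hcx))]
      _ ≤ F y := hkeyi
  -- summability of the shifted sequence
  have hsum_u : Summable (fun i : ℕ => F (↑i + ↑u)) := by
    have h := (summable_nat_add_iff u).2 hFsum
    exact h.congr (fun i => by push_cast; ring_nf)
  have hnonneg : ∀ i : ℕ, 0 ≤ F (↑i + ↑u) := fun i =>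
    (hFpos _ (by positivity)).le
  -- lower bound on the tsum
  have hcard : (Finset.Ico k (k + N)).card = N := by simp
  have hsumIco : (N:ℝ) * ((1 / 12 : ℝ) * F (↑k + ↑u))
      ≤ ∑ i ∈ Finset.Ico k (k + N), F (↑i + ↑u) := by
    have := Finset.card_nsmul_le_sum (Finset.Ico k (k + N))
      (fun i => F (↑i + ↑u)) ((1 / 12 : ℝ) * F (↑k + ↑u))
      (fun i hi => by
        obtain ⟨h1, h2⟩ := Finset.mem_Ico.1 hi
        exact hlow i h1 h2)
    rw [hcard] at this
    simpa [nsmul_eq_mul] using this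
  have hD : (N:ℝ) * ((1 / 12 : ℝ) * F (↑k + ↑u)) ≤ ∑' i : ℕ, F (↑i + ↑u) :=
    le_trans hsumIco (Summable.sum_le_tsum _ (fun i _ => hnonneg i) hsum_u)
  have hFk : 0 < F (↑k + ↑u) := hFpos _ (by positivity)
  have hDpos : 0 < ∑' i : ℕ, F (↑i + ↑u) :=
    lt_of_lt_of_le (by positivity) hD
  have hratio : F (↑k + ↑u) / (∑' i : ℕ, F (↑i + ↑u)) ≤ 12 / N := by
    calc F (↑k + ↑u) / (∑' i : ℕ, F (↑i + ↑u))
        ≤ F (↑k + ↑u) / ((N:ℝ) * ((1 / 12 : ℝ) * F (↑k + ↑u))) := by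
          apply div_le_div_of_nonneg_left hFk.le (by positivity) hD
      _ = 12 / N := by field_simp
  have hnn : 0 ≤ F (↑k + ↑u) / (∑' i : ℕ, F (↑i + ↑u)) :=
    div_nonneg hFk.le hDpos.le
  rw [Real.norm_eq_abs, abs_of_nonneg hnn]
  exact lt_of_le_of_lt hratio hNε
end

section
/- Let F̄(x) = c(x)·exp(−∫_0^x 1/a(y) dy) for x ≥ 0, where c : [0,∞) → (0,∞) is measurable with c(x) → c₀ > 0 as x → ∞, and a : [0,∞) → (0,∞) is measurable with 1/a locally integrable and a(x) → σ as x → ∞, where 0 < σ < ∞. Let p : ℕ → (0,∞) satisfy p(k) = F̄(k) for all k ∈ ℕ. Then p(n) / ∑_{i=n}^{∞} p(i) → 1 − e^{−1/σ} as n → ∞; in particular the hazard ratio of the discrete distribution converges to a positive finite constant. -/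
/-!
Writing `F x = c x * exp (-∫₀ˣ g)` with `g = 1/a`, the one-step ratio is
`F (x+1) / F x = (c (x+1) / c x) * exp (-∫ₓˣ⁺¹ g)`, which tends to `q = exp (-1/σ) < 1`.
For a positive sequence with `p (n+1) / p n → q < 1`, the normalised tails
`∑ᵢ p (n+i) / p n` are eventually dominated by a geometric series and converge termwise
to `qⁱ`, so by Tannery's theorem they tend to `(1 - q)⁻¹`.
-/

open MeasureTheory Filter Real Set Topology
open scoped Interval

section RatioTest

variable {p : ℕ → ℝ} {q : ℝ}

theorem tendsto_add_div_of_tendsto_succ_div (hp : ∀ n, p n ≠ 0)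
    (h : Tendsto (fun n => p (n + 1) / p n) atTop (𝓝 q)) (i : ℕ) :
    Tendsto (fun n => p (n + i) / p n) atTop (𝓝 (q ^ i)) := by
  induction i with
  | zero => simp [div_self (hp _)]
  | succ i ih =>
    rw [pow_succ']
    refine ((h.comp (tendsto_add_atTop_nat i)).mul ih).congr fun n => ?_
    simp only [Function.comp_apply, div_mul_div_cancel₀ (hp (n + i)), add_assoc]

theorem tendsto_tsum_add_div_of_tendsto_succ_div (hp : ∀ n, 0 < p n) (hq : q < 1)
    (h : Tendsto (fun n => p (n + 1) / p n) atTop (𝓝 q)) :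
    Tendsto (fun n => ∑' i, p (n + i) / p n) atTop (𝓝 (1 - q)⁻¹) := by
  have hq₀ : 0 ≤ q := ge_of_tendsto' h fun n => (div_pos (hp _) (hp _)).le
  obtain ⟨r, hqr, hr₁⟩ := exists_between hq
  have hr₀ : 0 ≤ r := hq₀.trans hqr.le
  obtain ⟨N, hN⟩ := (h.eventually_lt_const hqr).exists_forall_of_atTop
  have hstep : ∀ k ≥ N, p (k + 1) ≤ r * p k := fun k hk =>
    (div_le_iff₀ (hp k)).1 (hN k hk).le
  have hbound : ∀ n ≥ N, ∀ i, p (n + i) / p n ≤ r ^ i := fun n hn i => by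
    rw [div_le_iff₀ (hp n)]
    exact le_geom (u := fun i => p (n + i)) hr₀ i fun k _ => hstep (n + k) (by omega)
  rw [← tsum_geometric_of_lt_one hq₀ hq]
  refine tendsto_tsum_of_dominated_convergence (summable_geometric_of_lt_one hr₀ hr₁)
    (tendsto_add_div_of_tendsto_succ_div (fun n => (hp n).ne') h) ?_
  filter_upwards [eventually_ge_atTop N] with n hn i
  rw [Real.norm_of_nonneg (div_pos (hp _) (hp _)).le]
  exact hbound n hn i

theorem tendsto_div_tsum_of_tendsto_succ_div (hp : ∀ᶠ n in atTop, 0 < p n) (hq : q < 1)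
    (h : Tendsto (fun n => p (n + 1) / p n) atTop (𝓝 q)) :
    Tendsto (fun n => p n / ∑' i, p (n + i)) atTop (𝓝 (1 - q)) := by
  obtain ⟨N, hN⟩ := hp.exists_forall_of_atTop
  set p' : ℕ → ℝ := fun n => p (n + N)
  have hp' : ∀ n, 0 < p' n := fun n => hN _ (Nat.le_add_left N n)
  have h' : Tendsto (fun n => p' (n + 1) / p' n) atTop (𝓝 q) := by
    simpa only [p', add_right_comm _ 1 N, Function.comp_def] using h.comp (tendsto_add_atTop_nat N)
  have htails := (tendsto_tsum_add_div_of_tendsto_succ_div hp' hq h').inv₀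
    (inv_ne_zero (sub_pos.2 hq).ne')
  rw [inv_inv] at htails
  refine (tendsto_add_atTop_iff_nat N).1 (htails.congr fun n => ?_)
  simp only [p', tsum_div_const, inv_div, add_right_comm _ N]

end RatioTest

theorem tendsto_integral_add_one_of_tendsto {f : ℝ → ℝ} {l : ℝ} (hf : Tendsto f atTop (𝓝 l))
    (hint : ∀ᶠ x in atTop, IntervalIntegrable f volume x (x + 1)) :
    Tendsto (fun x => ∫ y in x..x + 1, f y) atTop (𝓝 l) := by
  rw [Metric.tendsto_nhds]
  intro ε hε
  obtain ⟨M, hM⟩ := eventually_atTop.1 (Metric.tendsto_nhds.1 hf (ε / 2) (half_pos hε))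
  filter_upwards [hint, eventually_ge_atTop M] with x hx hxM
  have hclose : ∀ y ∈ Ι x (x + 1), ‖f y - l‖ ≤ ε / 2 := fun y hy => by
    rw [uIoc_of_le (by linarith)] at hy
    exact (hM y (hxM.trans hy.1.le)).le
  calc dist (∫ y in x..x + 1, f y) l = ‖∫ y in x..x + 1, (f y - l)‖ := by
        rw [intervalIntegral.integral_sub hx intervalIntegrable_const, dist_eq_norm]; simp
    _ ≤ ε / 2 * |x + 1 - x| := intervalIntegral.norm_integral_le_of_norm_le_const hclose
    _ = ε / 2 := by simp
    _ < ε := half_lt_self hε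

theorem tendsto_succ_div_of_eq_mul_exp_neg_integral {c g F : ℝ → ℝ} {c₀ l : ℝ} (hc₀ : c₀ ≠ 0)
    (hc : Tendsto c atTop (𝓝 c₀)) (hg : Tendsto g atTop (𝓝 l))
    (hgint : ∀ x ≥ (0:ℝ), IntegrableOn g (Icc 0 x))
    (hF : ∀ x ≥ (0:ℝ), F x = c x * exp (-∫ y in (0:ℝ)..x, g y)) :
    Tendsto (fun x => F (x + 1) / F x) atTop (𝓝 (exp (-l))) := by
  have hII : ∀ {s t : ℝ}, 0 ≤ s → s ≤ t → IntervalIntegrable g volume s t := fun hs hst =>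
    (intervalIntegrable_iff_integrableOn_Icc_of_le hst).2
      ((hgint _ (hs.trans hst)).mono_set (Icc_subset_Icc hs le_rfl))
  have hsplit : ∀ x ≥ (0:ℝ),
      c (x + 1) / c x * exp (-∫ y in x..x + 1, g y) = F (x + 1) / F x := fun x hx => by
    rw [hF x hx, hF (x + 1) (by linarith), mul_div_mul_comm,
      ← intervalIntegral.integral_add_adjacent_intervals (hII le_rfl hx) (hII hx (by linarith)),
      neg_add, exp_add, mul_div_cancel_left₀ _ (exp_pos _).ne']
  have hc_ratio : Tendsto (fun x => c (x + 1) / c x) atTop (𝓝 1) := by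
    have h := (hc.comp (tendsto_atTop_add_const_right _ 1 tendsto_id)).div hc hc₀
    rwa [div_self hc₀] at h
  have hint : ∀ᶠ x in atTop, IntervalIntegrable g volume x (x + 1) :=
    (eventually_ge_atTop 0).mono fun x hx => hII hx (by linarith)
  have hlim := hc_ratio.mul (tendsto_integral_add_one_of_tendsto hg hint).neg.rexp
  rw [one_mul] at hlim
  exact hlim.congr' ((eventually_ge_atTop 0).mono hsplit)

theorem gumbel_discrete_hazard_ratio_tendsto_general
    (c a : ℝ → ℝ) (c₀ σ : ℝ) (hc₀ : 0 < c₀) (hσ : 0 < σ)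
    (hclim : Tendsto c atTop (nhds c₀))
    (haint : ∀ x ≥ (0:ℝ), IntegrableOn (fun y => (a y)⁻¹) (Set.Icc 0 x))
    (halim : Tendsto a atTop (nhds σ))
    (F : ℝ → ℝ)
    (hF : ∀ x ≥ (0:ℝ), F x = c x * Real.exp (-∫ y in (0:ℝ)..x, (a y)⁻¹))
    (p : ℕ → ℝ) (hp : ∀ k : ℕ, p k = F k) :
    Tendsto (fun n : ℕ => p n / ∑' i : ℕ, p (n + i))
      atTop (nhds (1 - Real.exp (-1 / σ))) := by
  have hq : exp (-1 / σ) < 1 := exp_lt_one_iff.2 (div_neg_of_neg_of_pos neg_one_lt_zero hσ)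
  have hpos : ∀ᶠ n : ℕ in atTop, 0 < p n := by
    filter_upwards [tendsto_natCast_atTop_atTop.eventually (hclim.eventually_const_lt hc₀)]
      with n hn
    rw [hp, hF _ n.cast_nonneg]
    positivity
  have hratio := tendsto_succ_div_of_eq_mul_exp_neg_integral hc₀.ne' hclim
    (halim.inv₀ hσ.ne') haint hF
  rw [← one_div, ← neg_div] at hratio
  refine tendsto_div_tsum_of_tendsto_succ_div hpos hq ?_
  simpa only [hp, Nat.cast_succ, Function.comp_def] using hratio.comp tendsto_natCast_atTop_atTop

/-- Let `F̄(x) = c(x)·exp(-∫₀ˣ 1/a(y) dy)` with `c(x) → c₀ > 0` and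
auxiliary function `a(x) → σ ∈ (0,∞)`, and let `p(k) = F̄(k)` on `ℕ`. Then the discrete
hazard ratio converges: `p(n)/∑_{i=n}^∞ p(i) → 1 - e^(-1/σ)` as `n → ∞`. -/
theorem gumbel_discrete_hazard_ratio_tendsto
    (c a : ℝ → ℝ) (c₀ σ : ℝ) (hc₀ : 0 < c₀) (hσ : 0 < σ)
    (hcpos : ∀ x ≥ (0:ℝ), 0 < c x) (hcmeas : Measurable c)
    (hclim : Tendsto c atTop (nhds c₀))
    (hapos : ∀ x ≥ (0:ℝ), 0 < a x) (hameas : Measurable a)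
    (haint : ∀ x ≥ (0:ℝ), IntegrableOn (fun y => (a y)⁻¹) (Set.Icc 0 x))
    (halim : Tendsto a atTop (nhds σ))
    (F : ℝ → ℝ)
    (hF : ∀ x ≥ (0:ℝ), F x = c x * Real.exp (-∫ y in (0:ℝ)..x, (a y)⁻¹))
    (p : ℕ → ℝ) (hp : ∀ k : ℕ, p k = F k) :
    Tendsto (fun n : ℕ => p n / ∑' i : ℕ, p (n + i))
      atTop (nhds (1 - Real.exp (-1 / σ))) :=
  gumbel_discrete_hazard_ratio_tendsto_general c a c₀ σ hc₀ hσ hclim haint halim F hF p hp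
end

section
/- Let λ > 0 and let p(k) = e^{−λ} λ^k / k! be the Poisson probability mass function. Then for every k ∈ ℕ, as u → ∞ along the positive integers, p(u + k) / ∑_{i=0}^{∞} p(u + i) → 1 if k = 0 and → 0 if k ≥ 1. That is, the conditional exceedance distribution of a Poisson random variable above a high integer threshold degenerates at 0. -/
open Filter Real

lemma poisson_fact_aux (u i : ℕ) : u.factorial * (u + 1) ^ i ≤ (u + i).factorial := by
  induction i with
  | zero => simp
  | succ n ih =>
    have h : (u + (n + 1)).factorial = (u + n + 1) * (u + n).factorial := by
      rw [show u + (n + 1) = (u + n) + 1 by ring, Nat.factorial_succ]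
    rw [h, pow_succ]
    calc u.factorial * ((u + 1) ^ n * (u + 1)) = (u + 1) * (u.factorial * (u + 1) ^ n) := by
          ring
      _ ≤ (u + n + 1) * (u + n).factorial := Nat.mul_le_mul (by omega) ih

/-- For the Poisson probability mass function `p(k) = e^(-λ) λ^k / k!`
with rate `λ > 0`, the conditional exceedance distribution above a high integer
threshold degenerates at `0`: for every `k ∈ ℕ`,
`p(u+k)/∑_{i=0}^∞ p(u+i) → 1` if `k = 0` and `→ 0` if `k ≥ 1`, as `u → ∞`. -/
theorem poisson_exceedances_degenerate (lam : ℝ) (hlam : 0 < lam) (p : ℕ → ℝ)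
    (hp : ∀ k : ℕ, p k = Real.exp (-lam) * lam ^ k / (k.factorial : ℝ)) :
    ∀ k : ℕ, Filter.Tendsto (fun u : ℕ => p (u + k) / ∑' i : ℕ, p (u + i))
      Filter.atTop (nhds (if k = 0 then 1 else 0)) := by
  have hppos : ∀ n : ℕ, 0 < p n := by
    intro n; rw [hp]; positivity
  have hsum : ∀ u : ℕ, Summable (fun i : ℕ => p (u + i)) := by
    intro u
    have hps : Summable p := by
      have h := (Real.summable_pow_div_factorial lam).mul_left (Real.exp (-lam))
      exact h.congr (fun n => by rw [hp]; ring)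
    exact ((summable_nat_add_iff u).2 hps).congr (fun i => by rw [add_comm])
  -- key termwise bound
  have hbound : ∀ u i : ℕ, p (u + i) ≤ p u * (lam / ((u : ℝ) + 1)) ^ i := by
    intro u i
    have h1 : (u.factorial : ℝ) * ((u : ℝ) + 1) ^ i ≤ ((u + i).factorial : ℝ) := by
      exact_mod_cast poisson_fact_aux u i
    calc p (u + i) = Real.exp (-lam) * lam ^ (u + i) / (((u + i).factorial : ℝ)) := by
          rw [hp]
      _ ≤ Real.exp (-lam) * lam ^ (u + i) / ((u.factorial : ℝ) * ((u : ℝ) + 1) ^ i) := by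
          gcongr
      _ = p u * (lam / ((u : ℝ) + 1)) ^ i := by
          rw [hp, div_pow, pow_add]
          have hu : ((u : ℝ) + 1) ^ i ≠ 0 := by positivity
          have hf : (u.factorial : ℝ) ≠ 0 := by positivity
          field_simp
  have hpleS : ∀ u : ℕ, p u ≤ ∑' i : ℕ, p (u + i) := by
    intro u
    have := Summable.le_tsum (hsum u) 0 (fun j _ => (hppos _).le)
    simpa using this
  have hSpos : ∀ u : ℕ, 0 < ∑' i : ℕ, p (u + i) := fun u => lt_of_lt_of_le (hppos u) (hpleS u)
  have hq0 : ∀ u : ℕ, (0 : ℝ) ≤ lam / ((u : ℝ) + 1) := by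
    intro u; positivity
  -- q tends to 0
  have hq : Tendsto (fun u : ℕ => lam / ((u : ℝ) + 1)) atTop (nhds 0) := by
    have := tendsto_one_div_add_atTop_nhds_zero_nat.const_mul lam
    simpa [div_eq_mul_inv, one_div, mul_zero] using this
  intro k
  by_cases hk : k = 0
  · -- k = 0 : limit is 1
    subst hk
    simp only [if_pos rfl, Nat.add_zero]
    -- upper bound : ≤ 1
    have hub : ∀ u : ℕ, p u / ∑' i : ℕ, p (u + i) ≤ 1 := by
      intro u
      rw [div_le_one (hSpos u)]
      exact hpleS u
    -- lower bound eventually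
    have hlb : ∀ᶠ u : ℕ in atTop,
        (1 + 2 * (lam / ((u : ℝ) + 1)))⁻¹ ≤ p u / ∑' i : ℕ, p (u + i) := by
      filter_upwards [eventually_ge_atTop ⌈2 * lam⌉₊] with u hu
      set q : ℝ := lam / ((u : ℝ) + 1) with hqdef
      have h2lam : 2 * lam ≤ (u : ℝ) + 1 := by
        have h1 : 2 * lam ≤ (⌈2 * lam⌉₊ : ℝ) := Nat.le_ceil _
        have h2 : ((⌈2 * lam⌉₊ : ℕ) : ℝ) ≤ (u : ℝ) := by exact_mod_cast hu
        linarith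
      have hu1 : (0 : ℝ) < (u : ℝ) + 1 := by positivity
      have hqhalf : q ≤ 1 / 2 := by
        rw [hqdef, div_le_div_iff₀ hu1 (by norm_num)]
        linarith
      have hq0' : 0 ≤ q := hq0 u
      have hq1 : q < 1 := lt_of_le_of_lt hqhalf (by norm_num)
      -- S u ≤ p u * (1-q)⁻¹
      have hSub : (∑' i : ℕ, p (u + i)) ≤ p u * (1 - q)⁻¹ := by
        have hg : Summable (fun i : ℕ => p u * q ^ i) :=
          (summable_geometric_of_lt_one hq0' hq1).mul_left (p u)
        have := Summable.tsum_le_tsum (fun i => hbound u i) (hsum u) hg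
        calc (∑' i : ℕ, p (u + i)) ≤ ∑' i : ℕ, p u * q ^ i := this
          _ = p u * (1 - q)⁻¹ := by
              rw [tsum_mul_left, tsum_geometric_of_lt_one hq0' hq1]
      have hgeom : (1 - q)⁻¹ ≤ 1 + 2 * q := by
        rw [inv_le_iff_one_le_mul₀ (by linarith)]
        nlinarith
      have hSub2 : (∑' i : ℕ, p (u + i)) ≤ p u * (1 + 2 * q) := by
        calc (∑' i : ℕ, p (u + i)) ≤ p u * (1 - q)⁻¹ := hSub
          _ ≤ p u * (1 + 2 * q) := by
              apply mul_le_mul_of_nonneg_left hgeom (hppos u).le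
      have h12q : (0 : ℝ) < 1 + 2 * q := by linarith
      calc (1 + 2 * q)⁻¹ = p u / (p u * (1 + 2 * q)) := by
            rw [div_mul_eq_div_div, div_self (hppos u).ne', one_div]
        _ ≤ p u / ∑' i : ℕ, p (u + i) := by
            gcongr
            · exact (hppos u).le
            · exact hSpos u
    -- the lower bound tends to 1
    have hL : Tendsto (fun u : ℕ => (1 + 2 * (lam / ((u : ℝ) + 1)))⁻¹) atTop (nhds 1) := by
      have h1 : Tendsto (fun u : ℕ => 1 + 2 * (lam / ((u : ℝ) + 1))) atTop (nhds (1 + 2 * 0)) :=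
        tendsto_const_nhds.add (hq.const_mul 2)
      have h2 := h1.inv₀ (by norm_num)
      simpa using h2
    exact tendsto_of_tendsto_of_tendsto_of_le_of_le' hL tendsto_const_nhds hlb
      (Eventually.of_forall hub)
  · -- k ≥ 1 : limit is 0
    simp only [if_neg hk]
    have hub : ∀ u : ℕ, p (u + k) / ∑' i : ℕ, p (u + i) ≤ (lam / ((u : ℝ) + 1)) ^ k := by
      intro u
      have h1 : p (u + k) / ∑' i : ℕ, p (u + i) ≤ (p u * (lam / ((u : ℝ) + 1)) ^ k) / p u := by
        apply div_le_div₀ (mul_nonneg (hppos u).le (by positivity)) (hbound u k) (hppos u) (hpleS u)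
      calc p (u + k) / ∑' i : ℕ, p (u + i) ≤ (p u * (lam / ((u : ℝ) + 1)) ^ k) / p u := h1
        _ = (lam / ((u : ℝ) + 1)) ^ k := by
            rw [mul_comm, mul_div_assoc, div_self (hppos u).ne', mul_one]
    have hlb : ∀ u : ℕ, 0 ≤ p (u + k) / ∑' i : ℕ, p (u + i) := by
      intro u
      exact div_nonneg (hppos _).le (hSpos u).le
    have hg : Tendsto (fun u : ℕ => (lam / ((u : ℝ) + 1)) ^ k) atTop (nhds 0) := by
      have := hq.pow k
      rwa [zero_pow hk] at this
    exact tendsto_of_tendsto_of_tendsto_of_le_of_le tendsto_const_nhds hg hlb hub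
end

section
/- Let r > 0 and q ∈ (0,1), and let p(k) = (Γ(k + r) / (Γ(r)·k!))·q^r·(1 − q)^k be the negative binomial probability mass function with number of successes r and success probability q. Then for every k ∈ ℕ, as u → ∞ along the positive integers, p(u + k) / ∑_{i=0}^{∞} p(u + i) → q·(1 − q)^k. That is, the conditional exceedance distribution of a negative binomial random variable above a high integer threshold converges to the geometric distribution with success probability q. -/
open Filter Topology

/-!
If the ratios `p (n + 1) / p n` of a positive sequence tend to `ρ < 1`, then
`p (u + i) / p u → ρ ^ i` for each `i`, and for large `u` these quotients are dominated by a
geometric sequence `s ^ i` with `ρ < s < 1`. Dominated convergence then gives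
`∑' i, p (u + i) / p u → (1 - ρ)⁻¹`, hence `p (u + k) / ∑' i, p (u + i) → (1 - ρ) ρ ^ k`.
For the negative binomial law, `Γ (x + 1) = x Γ x` makes the ratio `(n + r) / (n + 1) * (1 - q)`,
which tends to `ρ = 1 - q`.
-/

section RatioTest

variable {p : ℕ → ℝ} {ρ : ℝ}

theorem tendsto_shift_div_of_ratio_tendsto (hp : ∀ n, p n ≠ 0)
    (h : Tendsto (fun n => p (n + 1) / p n) atTop (𝓝 ρ)) (i : ℕ) :
    Tendsto (fun u => p (u + i) / p u) atTop (𝓝 (ρ ^ i)) := by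
  induction i with
  | zero =>
    simpa using tendsto_const_nhds.congr fun u => (div_self (hp u)).symm
  | succ i ih =>
    have hshift : Tendsto (fun u => p (u + i + 1) / p (u + i)) atTop (𝓝 ρ) :=
      h.comp (tendsto_add_atTop_nat i)
    refine (ih.mul hshift).congr fun u => ?_
    rw [← add_assoc, div_mul_div_cancel₀' (hp (u + i))]

theorem shift_le_pow_mul_of_succ_le {s : ℝ} {N : ℕ} (hs : 0 ≤ s)
    (h : ∀ n ≥ N, p (n + 1) ≤ s * p n) {u : ℕ} (hu : N ≤ u) (i : ℕ) :
    p (u + i) ≤ s ^ i * p u := by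
  induction i with
  | zero => simp
  | succ i ih =>
    calc p (u + (i + 1)) ≤ s * p (u + i) := h (u + i) (by omega)
      _ ≤ s * (s ^ i * p u) := mul_le_mul_of_nonneg_left ih hs
      _ = s ^ (i + 1) * p u := by ring

theorem tendsto_tsum_shift_div_of_ratio_tendsto (hpos : ∀ n, 0 < p n) (hρ : ρ < 1)
    (h : Tendsto (fun n => p (n + 1) / p n) atTop (𝓝 ρ)) :
    Tendsto (fun u => ∑' i, p (u + i) / p u) atTop (𝓝 (1 - ρ)⁻¹) := by
  have hρ0 : 0 ≤ ρ := ge_of_tendsto' h fun n => (div_pos (hpos _) (hpos n)).le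
  obtain ⟨s, hρs, hs1⟩ := exists_between hρ
  have hs0 : 0 ≤ s := hρ0.trans hρs.le
  obtain ⟨N, hN⟩ := eventually_atTop.1 (h.eventually (gt_mem_nhds hρs))
  have hdom : ∀ n ≥ N, p (n + 1) ≤ s * p n := fun n hn =>
    ((div_lt_iff₀ (hpos n)).1 (hN n hn)).le
  rw [← tsum_geometric_of_lt_one hρ0 hρ]
  refine tendsto_tsum_of_dominated_convergence (summable_geometric_of_lt_one hs0 hs1)
    (tendsto_shift_div_of_ratio_tendsto (fun n => (hpos n).ne') h) ?_
  filter_upwards [eventually_ge_atTop N] with u hu i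
  rw [Real.norm_of_nonneg (div_pos (hpos _) (hpos u)).le, div_le_iff₀ (hpos u)]
  exact shift_le_pow_mul_of_succ_le hs0 hdom hu i

theorem tendsto_div_tsum_shift_of_ratio_tendsto (hpos : ∀ n, 0 < p n) (hρ : ρ < 1)
    (h : Tendsto (fun n => p (n + 1) / p n) atTop (𝓝 ρ)) (k : ℕ) :
    Tendsto (fun u => p (u + k) / ∑' i, p (u + i)) atTop (𝓝 ((1 - ρ) * ρ ^ k)) := by
  have hlim := (tendsto_shift_div_of_ratio_tendsto (fun n => (hpos n).ne') h k).div
    (tendsto_tsum_shift_div_of_ratio_tendsto hpos hρ h) (inv_ne_zero (sub_ne_zero.2 hρ.ne'))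
  rw [div_inv_eq_mul, mul_comm] at hlim
  refine hlim.congr fun u => ?_
  rw [Pi.div_apply, tsum_div_const, div_div_div_cancel_right₀ (hpos u).ne']

end RatioTest

theorem tendsto_natCast_add_div_natCast_add_one (a : ℝ) :
    Tendsto (fun n : ℕ => ((n : ℝ) + a) / (n + 1)) atTop (𝓝 1) := by
  have hlim := (tendsto_natCast_div_add_atTop (1 : ℝ)).add
    (tendsto_one_div_add_atTop_nhds_zero_nat.const_mul a)
  rw [mul_zero, add_zero] at hlim
  exact hlim.congr fun n => by ring

noncomputable def negBinomialPMF (r q : ℝ) (k : ℕ) : ℝ :=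
  Real.Gamma ((k : ℝ) + r) / (Real.Gamma r * (k.factorial : ℝ)) * q ^ r * (1 - q) ^ k

section NegBinomial

variable {r q : ℝ}

theorem negBinomialPMF_pos (hr : 0 < r) (hq0 : 0 < q) (hq1 : q < 1) (k : ℕ) :
    0 < negBinomialPMF r q k := by
  have := Real.Gamma_pos_of_pos (by positivity : 0 < (k : ℝ) + r)
  have := Real.Gamma_pos_of_pos hr
  have := Real.rpow_pos_of_pos hq0 r
  have : 0 < 1 - q := sub_pos.2 hq1
  unfold negBinomialPMF
  positivity

theorem negBinomialPMF_succ_div (hr : 0 < r) (hq0 : 0 < q) (hq1 : q < 1) (n : ℕ) :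
    negBinomialPMF r q (n + 1) / negBinomialPMF r q n = (n + r) / (n + 1) * (1 - q) := by
  have hΓ : Real.Gamma ((n : ℝ) + 1 + r) = (n + r) * Real.Gamma (n + r) := by
    rw [add_right_comm, Real.Gamma_add_one (by positivity)]
  rw [div_eq_iff (negBinomialPMF_pos hr hq0 hq1 n).ne']
  have := Real.Gamma_pos_of_pos hr
  unfold negBinomialPMF
  push_cast
  rw [hΓ, Nat.factorial_succ, Nat.cast_mul, Nat.cast_succ]
  field_simp
  ring

end NegBinomial

/-- For the negative binomial probability mass function
`p(k) = (Γ(k+r)/(Γ(r)·k!))·q^r·(1-q)^k` with `r > 0` and `q ∈ (0,1)`, the conditional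
exceedance distribution above a high integer threshold converges to the geometric
distribution with success probability `q`: for every `k ∈ ℕ`,
`p(u+k)/∑_{i=0}^∞ p(u+i) → q·(1-q)^k` as `u → ∞` over the positive integers. -/
theorem negBinomial_exceedances_tendsto_geometric
    (r q : ℝ) (hr : 0 < r) (hq0 : 0 < q) (hq1 : q < 1) (p : ℕ → ℝ)
    (hp : ∀ k : ℕ, p k = Real.Gamma ((k : ℝ) + r) / (Real.Gamma r * (k.factorial : ℝ))
      * q ^ r * (1 - q) ^ k) :
    ∀ k : ℕ, Filter.Tendsto (fun u : ℕ => p (u + k) / ∑' i : ℕ, p (u + i))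
      Filter.atTop (nhds (q * (1 - q) ^ k)) := by
  obtain rfl : p = negBinomialPMF r q := funext hp
  intro k
  have hratio : Tendsto (fun n => negBinomialPMF r q (n + 1) / negBinomialPMF r q n) atTop
      (𝓝 (1 - q)) := by
    simpa only [negBinomialPMF_succ_div hr hq0 hq1, one_mul] using
      (tendsto_natCast_add_div_natCast_add_one r).mul_const (1 - q)
  simpa only [sub_sub_cancel] using tendsto_div_tsum_shift_of_ratio_tendsto
    (negBinomialPMF_pos hr hq0 hq1) (by linarith) hratio k
end

section
/- Let δ ∈ [0,1) and fix k ∈ ℕ. Then, for ξ = 0, p_DGPD(k; σ, 0) / f_GPD(k + δ; σ, 0) = σ·e^{δ/σ}·(1 − e^{−1/σ}) for every σ > 0 (independently of k), and as σ → ∞, σ·e^{δ/σ}·(1 − e^{−1/σ}) = 1 + (2δ − 1)/(2σ) + O(σ^{−2}). In particular the first-order term vanishes exactly when δ = 1/2. -/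
/-!
With `t = 1/σ` the ratio is `(e^{δt} - e^{(δ-1)t}) / t`. Expanding both exponentials to second
order, with the cubic remainder bound of `Real.exp_bound`, the numerator is
`t + (δ² - (δ-1)²) t²/2 + O(t³) = t + (2δ - 1) t²/2 + O(t³)`.
-/

open Real

lemma abs_exp_sub_taylor_two_le {x : ℝ} (hx : |x| ≤ 1) :
    |exp x - (1 + x + x ^ 2 / 2)| ≤ |x| ^ 3 := by
  have h := exp_bound hx (n := 3) (by norm_num)
  norm_num [Finset.sum_range_succ, Nat.factorial] at h
  calc |exp x - (1 + x + x ^ 2 / 2)| ≤ |x| ^ 3 * (2 / 9) := by convert h using 3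
    _ ≤ |x| ^ 3 := mul_le_of_le_one_right (by positivity) (by norm_num)

lemma abs_exp_mul_sub_exp_mul_sub_taylor_le {a b x : ℝ} (ha : |a * x| ≤ 1) (hb : |b * x| ≤ 1) :
    |exp (a * x) - exp (b * x) - ((a - b) * x + (a ^ 2 - b ^ 2) / 2 * x ^ 2)|
      ≤ (|a| ^ 3 + |b| ^ 3) * |x| ^ 3 := by
  have hexpand : exp (a * x) - exp (b * x) - ((a - b) * x + (a ^ 2 - b ^ 2) / 2 * x ^ 2)
      = (exp (a * x) - (1 + a * x + (a * x) ^ 2 / 2))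
        - (exp (b * x) - (1 + b * x + (b * x) ^ 2 / 2)) := by ring
  calc _ ≤ |a * x| ^ 3 + |b * x| ^ 3 := by
        rw [hexpand]
        exact (abs_sub _ _).trans
          (add_le_add (abs_exp_sub_taylor_two_le ha) (abs_exp_sub_taylor_two_le hb))
    _ = (|a| ^ 3 + |b| ^ 3) * |x| ^ 3 := by rw [abs_mul, abs_mul]; ring

lemma pDGPD0_div_fGPD0 {σ : ℝ} (hσ : σ ≠ 0) (k : ℕ) (δ : ℝ) :
    pDGPD0 σ k / fGPD0 σ ((k : ℝ) + δ) = σ * exp (δ / σ) * (1 - exp (-1 / σ)) := by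
  have hf : fGPD0 σ ((k : ℝ) + δ) ≠ 0 := by unfold fGPD0; positivity
  rw [div_eq_iff hf, pDGPD0, fGPD0]
  have hk : -(k : ℝ) / σ = δ / σ + -((k : ℝ) + δ) / σ := by ring
  have hk1 : -((k : ℝ) + 1) / σ = δ / σ + -1 / σ + -((k : ℝ) + δ) / σ := by ring
  rw [hk, hk1, exp_add, exp_add, exp_add]
  field_simp

lemma one_le_abs_add_abs_sub_one (δ : ℝ) : 1 ≤ |δ| + |δ - 1| := by
  simpa using abs_sub δ (δ - 1)

lemma abs_mul_exp_mul_one_sub_exp_sub_le {δ σ : ℝ} (hσ : |δ| + |δ - 1| ≤ σ) :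
    |σ * exp (δ / σ) * (1 - exp (-1 / σ)) - (1 + (2 * δ - 1) / (2 * σ))|
      ≤ (|δ| + |δ - 1|) ^ 3 / σ ^ 2 := by
  have hσ0 : 0 < σ := by linarith [one_le_abs_add_abs_sub_one δ]
  have hσinv : |σ⁻¹| = σ⁻¹ := abs_of_pos (inv_pos.2 hσ0)
  have hsmall : ∀ {a : ℝ}, |a| ≤ σ → |a * σ⁻¹| ≤ 1 := fun ha => by
    rw [abs_mul, hσinv, ← div_eq_mul_inv]; exact div_le_one_of_le₀ ha hσ0.le
  have key := abs_exp_mul_sub_exp_mul_sub_taylor_le (x := σ⁻¹)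
    (hsmall (a := δ) (by linarith [abs_nonneg (δ - 1)]))
    (hsmall (a := δ - 1) (by linarith [abs_nonneg δ]))
  have hrw : σ * exp (δ / σ) * (1 - exp (-1 / σ)) - (1 + (2 * δ - 1) / (2 * σ))
      = σ * (exp (δ * σ⁻¹) - exp ((δ - 1) * σ⁻¹)
        - ((δ - (δ - 1)) * σ⁻¹ + (δ ^ 2 - (δ - 1) ^ 2) / 2 * σ⁻¹ ^ 2)) := by
    rw [show (δ - 1) * σ⁻¹ = δ / σ + -1 / σ by ring, exp_add]
    field_simp
    ring
  rw [hσinv] at key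
  rw [hrw, abs_mul, abs_of_pos hσ0]
  calc σ * |_| ≤ σ * ((|δ| ^ 3 + |δ - 1| ^ 3) * σ⁻¹ ^ 3) := by gcongr
    _ ≤ σ * ((|δ| + |δ - 1|) ^ 3 * σ⁻¹ ^ 3) := by
        gcongr
        exact pow_add_pow_le (abs_nonneg _) (abs_nonneg _) three_ne_zero
    _ = (|δ| + |δ - 1|) ^ 3 / σ ^ 2 := by field_simp

theorem pDGPD0_continuity_correction_expansion_general
    (δ : ℝ) (k : ℕ) :
    (∀ σ > (0:ℝ),
      pDGPD0 σ k / fGPD0 σ ((k : ℝ) + δ)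
        = σ * Real.exp (δ / σ) * (1 - Real.exp (-1 / σ))) ∧
    (∃ C > (0:ℝ), ∃ σ₀ : ℝ, ∀ σ ≥ σ₀,
      |σ * Real.exp (δ / σ) * (1 - Real.exp (-1 / σ))
          - (1 + (2 * δ - 1) / (2 * σ))| ≤ C / σ ^ 2) ∧
    (2 * δ - 1 = 0 ↔ δ = 1 / 2) := by
  refine ⟨fun σ hσ => pDGPD0_div_fGPD0 hσ.ne' k δ,
    ⟨(|δ| + |δ - 1|) ^ 3,
      pow_pos (by linarith [one_le_abs_add_abs_sub_one δ]) 3, |δ| + |δ - 1|,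
      fun σ hσ => abs_mul_exp_mul_one_sub_exp_sub_le hσ⟩, ?_⟩
  constructor <;> intro h <;> linarith

/-- For `ξ = 0`, `δ ∈ [0,1)` and fixed `k ∈ ℕ`: for every `σ > 0`,
`p_DGPD(k;σ,0)/f_GPD(k+δ;σ,0) = σ·e^(δ/σ)·(1 - e^(-1/σ))` (independently of `k`), and
as `σ → ∞`, `σ·e^(δ/σ)·(1 - e^(-1/σ)) = 1 + (2δ-1)/(2σ) + O(σ⁻²)`; the first-order
term vanishes exactly when `δ = 1/2`. -/
theorem pDGPD0_continuity_correction_expansion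
    (δ : ℝ) (hδ : δ ∈ Set.Ico (0:ℝ) 1) (k : ℕ) :
    (∀ σ > (0:ℝ),
      pDGPD0 σ k / fGPD0 σ ((k : ℝ) + δ)
        = σ * Real.exp (δ / σ) * (1 - Real.exp (-1 / σ))) ∧
    (∃ C > (0:ℝ), ∃ σ₀ : ℝ, ∀ σ ≥ σ₀,
      |σ * Real.exp (δ / σ) * (1 - Real.exp (-1 / σ))
          - (1 + (2 * δ - 1) / (2 * σ))| ≤ C / σ ^ 2) ∧
    (2 * δ - 1 = 0 ↔ δ = 1 / 2) :=
  pDGPD0_continuity_correction_expansion_general δ k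
end

section
/- Let Y be a real random variable with P(Y ≥ x) = F̄_GPD(x; σ, ξ) for all x ≥ 0, where σ > 0 and ξ ≥ 0. Let λ > 0, let 0 < h ≤ 1, and set X = ⌊λY + 1 − h⌋. Then for every integer u ≥ 1 − h and every k ∈ ℕ, P(X ≥ u + k) / P(X ≥ u) = F̄_GPD(k; λσ + ξ(u + h − 1), ξ). That is, conditionally on X ≥ u, the exceedance X − u has the discrete generalized Pareto distribution with scale parameter λσ + ξ(u + h − 1) and shape parameter ξ; so discretizing a GPD by any rounding scheme and thresholding yields a D-GPD with the same shape parameter. -/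
open MeasureTheory
open scoped ProbabilityTheory

/-!
The event `⌊λY + 1 - h⌋ ≥ m` is the event `Y ≥ (m + h - 1)/λ`, so the discretized tail is the
GPD tail with scale `λσ` evaluated at `m + h - 1`. The claim is then the threshold stability of
the GPD: conditioning a GPD(σ, ξ) tail on exceeding `a` leaves a GPD(σ + ξa, ξ) tail.
-/

theorem le_floor_mul_add_iff {K : Type*} [Field K] [LinearOrder K] [IsStrictOrderedRing K]
    [FloorRing K] {c : K} (hc : 0 < c) (m : ℤ) (y b : K) :
    m ≤ ⌊c * y + b⌋ ↔ (m - b) / c ≤ y := by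
  rw [Int.le_floor, div_le_iff₀ hc]
  constructor <;> intro <;> linarith

theorem gpdSurv_div (σ ξ x c : ℝ) : gpdSurv σ ξ (x / c) = gpdSurv (c * σ) ξ x := by
  simp only [gpdSurv, neg_div, div_div, mul_div_assoc]

theorem gpdSurv_add_div_gpdSurv {σ ξ a t : ℝ} (hσ : 0 < σ) (hξ : 0 ≤ ξ) (ha : 0 ≤ a)
    (ht : 0 ≤ t) : gpdSurv σ ξ (a + t) / gpdSurv σ ξ a = gpdSurv (σ + ξ * a) ξ t := by
  rcases hξ.eq_or_lt with rfl | hξ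
  · simp only [gpdSurv, if_true, zero_mul, add_zero, ← Real.exp_sub]
    ring_nf
  · simp only [gpdSurv, hξ.ne', if_false]
    rw [← Real.div_rpow (by positivity) (by positivity)]
    congr 1
    field_simp
    ring

theorem discretized_gpd_exceedance_is_DGPD_general
    {Ω : Type*} [MeasureSpace Ω]
    (Y : Ω → ℝ) (σ ξ lam h : ℝ)
    (hσ : 0 < σ) (hξ : 0 ≤ ξ) (hlam : 0 < lam)
    (hY : ∀ x ≥ (0:ℝ), (ℙ {ω | x ≤ Y ω}).toReal = gpdSurv σ ξ x) :
    ∀ u : ℤ, (1:ℝ) - h ≤ (u : ℝ) → ∀ k : ℕ,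
      (ℙ {ω | (u : ℤ) + (k : ℤ) ≤ ⌊lam * Y ω + 1 - h⌋}).toReal /
          (ℙ {ω | (u : ℤ) ≤ ⌊lam * Y ω + 1 - h⌋}).toReal
        = gpdSurv (lam * σ + ξ * ((u : ℝ) + h - 1)) ξ (k : ℝ) := by
  intro u hu k
  have discretized_tail : ∀ m : ℤ, 1 - h ≤ (m : ℝ) →
      (ℙ {ω | m ≤ ⌊lam * Y ω + 1 - h⌋}).toReal = gpdSurv (lam * σ) ξ (m + h - 1) := by
    intro m hm
    have event_eq : {ω | m ≤ ⌊lam * Y ω + 1 - h⌋} = {ω | (m + h - 1) / lam ≤ Y ω} := by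
      ext ω
      simp only [Set.mem_ofPred_eq]
      rw [add_sub_assoc, le_floor_mul_add_iff hlam, sub_sub_eq_add_sub]
    rw [event_eq, hY _ (div_nonneg (by linarith) hlam.le), gpdSurv_div]
  have hk : (0 : ℝ) ≤ k := k.cast_nonneg
  rw [discretized_tail (u + k) (by push_cast; linarith), discretized_tail u hu]
  push_cast
  rw [show (u : ℝ) + k + h - 1 = (u + h - 1) + k by ring]
  exact gpdSurv_add_div_gpdSurv (by positivity) hξ (by linarith) hk

/-- Let `Y` be GPD(σ, ξ) distributed with `σ > 0`, `ξ ≥ 0`, let `λ > 0`,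
`0 < h ≤ 1` and set `X = ⌊λY + 1 - h⌋`. Then for every integer `u ≥ 1 - h` and every
`k ∈ ℕ`, `P(X ≥ u + k)/P(X ≥ u) = F̄_GPD(k; λσ + ξ(u+h-1), ξ)`: conditionally on
`X ≥ u`, the exceedance `X - u` is D-GPD with scale `λσ + ξ(u+h-1)` and shape `ξ`. -/
theorem discretized_gpd_exceedance_is_DGPD
    {Ω : Type*} [MeasureSpace Ω] [IsProbabilityMeasure (ℙ : Measure Ω)]
    (Y : Ω → ℝ) (hYm : Measurable Y) (σ ξ lam h : ℝ)
    (hσ : 0 < σ) (hξ : 0 ≤ ξ) (hlam : 0 < lam) (hh0 : 0 < h) (hh1 : h ≤ 1)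
    (hY : ∀ x ≥ (0:ℝ), (ℙ {ω | x ≤ Y ω}).toReal = gpdSurv σ ξ x) :
    ∀ u : ℤ, (1:ℝ) - h ≤ (u : ℝ) → ∀ k : ℕ,
      (ℙ {ω | (u : ℤ) + (k : ℤ) ≤ ⌊lam * Y ω + 1 - h⌋}).toReal /
          (ℙ {ω | (u : ℤ) ≤ ⌊lam * Y ω + 1 - h⌋}).toReal
        = gpdSurv (lam * σ + ξ * ((u : ℝ) + h - 1)) ξ (k : ℝ) :=
  discretized_gpd_exceedance_is_DGPD_general Y σ ξ lam h hσ hξ hlam hY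
end
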